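/- arXiv:2507.00640 — 8 statements merged into one kernel-verified Lean document; each statement's English description precedes it below -/
import Mathlib

section
/- For strictly positive bounded functions f, g on a set S that are bounded away from zero, the Hilbert projective metric satisfies d_H(f,g) ≤ (2 / min(inf f, inf g)) · ‖f − g‖_∞, where d_H(f,g) = log(sup(f/g) / inf(f/g)). -/
/-- Hilbert projective metric: `d_H(f,g) = log( sup (f/g) / inf (f/g) )`. -/
noncomputable def dH {α : Type*} (f g : α → ℝ) : ℝ :=
  Real.log ((⨆ x, f x / g x) / (⨅ x, f x / g x))

/-- For strictly positive bounded functions `f, g` bounded away from zero,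
`d_H(f,g) ≤ (2 / min(inf f, inf g)) · ‖f − g‖_∞`. -/
theorem stmt0 {α : Type*} [Nonempty α] (f g : α → ℝ)
    (hfb : BddAbove (Set.range f)) (hgb : BddAbove (Set.range g))
    (hf : 0 < ⨅ x, f x) (hg : 0 < ⨅ x, g x) :
    dH f g ≤ 2 / min (⨅ x, f x) (⨅ x, g x) * ⨆ x, |f x - g x| := by
  obtain ⟨Cf, hCf⟩ := hfb
  obtain ⟨Cg, hCg⟩ := hgb
  have hCf' : ∀ x, f x ≤ Cf := fun x => hCf ⟨x, rfl⟩
  have hCg' : ∀ x, g x ≤ Cg := fun x => hCg ⟨x, rfl⟩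
  have hfbb : BddBelow (Set.range f) := by
    by_contra h
    rw [Real.iInf_of_not_bddBelow h] at hf; exact lt_irrefl 0 hf
  have hgbb : BddBelow (Set.range g) := by
    by_contra h
    rw [Real.iInf_of_not_bddBelow h] at hg; exact lt_irrefl 0 hg
  have hfa : ∀ x, (⨅ x, f x) ≤ f x := fun x => ciInf_le hfbb x
  have hga : ∀ x, (⨅ x, g x) ≤ g x := fun x => ciInf_le hgbb x
  set m := min (⨅ x, f x) (⨅ x, g x) with hm
  have hm0 : 0 < m := lt_min hf hg
  have hmf : ∀ x, m ≤ f x := fun x => le_trans (min_le_left _ _) (hfa x)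
  have hmg : ∀ x, m ≤ g x := fun x => le_trans (min_le_right _ _) (hga x)
  have hfpos : ∀ x, 0 < f x := fun x => lt_of_lt_of_le hm0 (hmf x)
  have hgpos : ∀ x, 0 < g x := fun x => lt_of_lt_of_le hm0 (hmg x)
  have hDb : BddAbove (Set.range fun x => |f x - g x|) := by
    refine ⟨Cf + Cg, ?_⟩
    rintro _ ⟨x, rfl⟩
    rw [abs_sub_le_iff]
    constructor
    · have := hfpos x; have := hgpos x; have := hCf' x; have := hCg' x; linarith
    · have := hfpos x; have := hgpos x; have := hCf' x; have := hCg' x; linarith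
  set D := ⨆ x, |f x - g x| with hD
  have hD0 : 0 ≤ D := Real.iSup_nonneg (fun x => abs_nonneg _)
  have hDx : ∀ x, |f x - g x| ≤ D := fun x => le_ciSup hDb x
  set K := 1 + D / m with hK
  have hK1 : 1 ≤ K := by
    have : 0 ≤ D / m := div_nonneg hD0 hm0.le
    rw [hK]; linarith
  have hK0 : 0 < K := lt_of_lt_of_le one_pos hK1
  have hDm : D = (D / m) * m := by field_simp
  have hfg : ∀ x, f x / g x ≤ K := by
    intro x
    rw [div_le_iff₀ (hgpos x)]
    have h1 : f x - g x ≤ D := (abs_le.mp (hDx x)).2.trans_eq rfl |>.trans (le_refl D)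
    have h2 : (D / m) * m ≤ (D / m) * g x :=
      mul_le_mul_of_nonneg_left (hmg x) (div_nonneg hD0 hm0.le)
    have h3 : f x ≤ g x + (D / m) * g x := by
      rw [← hDm] at h2
      have := (abs_le.mp (hDx x)).2
      linarith [this]
    calc f x ≤ g x + (D / m) * g x := h3
      _ = K * g x := by ring
  have hgf : ∀ x, 1 / K ≤ f x / g x := by
    intro x
    have h2 : (D / m) * m ≤ (D / m) * f x :=
      mul_le_mul_of_nonneg_left (hmf x) (div_nonneg hD0 hm0.le)
    have habs : g x - f x ≤ D := by
      have := (abs_le.mp (hDx x)).1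
      linarith
    have h3 : g x ≤ K * f x := by
      rw [← hDm] at h2
      have : g x ≤ f x + (D / m) * f x := by linarith
      calc g x ≤ f x + (D / m) * f x := this
        _ = K * f x := by ring
    rw [div_le_div_iff₀ hK0 (hgpos x)]
    linarith
  have hrb : BddAbove (Set.range fun x => f x / g x) := by
    refine ⟨K, ?_⟩; rintro _ ⟨x, rfl⟩; exact hfg x
  have hM : (⨆ x, f x / g x) ≤ K := ciSup_le hfg
  have hm' : 1 / K ≤ ⨅ x, f x / g x := le_ciInf hgf
  have hm'0 : 0 < ⨅ x, f x / g x :=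
    lt_of_lt_of_le (by positivity) hm'
  have hMpos : 0 < ⨆ x, f x / g x := by
    obtain ⟨x0⟩ := ‹Nonempty α›
    have h1 : f x0 / g x0 ≤ ⨆ x, f x / g x := le_ciSup hrb x0
    have : 0 < f x0 / g x0 := div_pos (hfpos x0) (hgpos x0)
    linarith
  have hratio : (⨆ x, f x / g x) / (⨅ x, f x / g x) ≤ K * K := by
    calc (⨆ x, f x / g x) / (⨅ x, f x / g x) ≤ K / (1 / K) :=
          div_le_div₀ hK0.le hM (by positivity) hm'
      _ = K * K := by field_simp
  have hlog : Real.log ((⨆ x, f x / g x) / (⨅ x, f x / g x)) ≤ Real.log (K * K) := by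
    apply Real.log_le_log (by positivity) hratio
  have hlogK : Real.log K ≤ D / m := by
    have := Real.log_le_sub_one_of_pos hK0
    rw [hK] at this ⊢
    linarith
  have hlogKK : Real.log (K * K) = Real.log K + Real.log K :=
    Real.log_mul (ne_of_gt hK0) (ne_of_gt hK0)
  rw [dH]
  calc Real.log ((⨆ x, f x / g x) / (⨅ x, f x / g x)) ≤ Real.log (K * K) := hlog
    _ = Real.log K + Real.log K := hlogKK
    _ ≤ D / m + D / m := add_le_add hlogK hlogK
    _ = 2 / m * D := by ring
end

section
/- For strictly positive bounded functions f, g on S that are bounded away from zero, if sup(f/g) ≥ 1 and inf(f/g) ≤ 1, then d_H(f,g) ≥ (min(inf f, inf g) / (‖f‖_∞ · ‖g‖_∞)) · ‖f − g‖_∞. -/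
/-- If `sup (f/g) ≥ 1` and `inf (f/g) ≤ 1`, then
`d_H(f,g) ≥ (min(inf f, inf g) / (‖f‖_∞ ‖g‖_∞)) ‖f − g‖_∞`. -/
theorem stmt1 {α : Type*} [Nonempty α] (f g : α → ℝ)
    (hfb : BddAbove (Set.range f)) (hgb : BddAbove (Set.range g))
    (hf : 0 < ⨅ x, f x) (hg : 0 < ⨅ x, g x)
    (hsup : 1 ≤ ⨆ x, f x / g x) (hinf : (⨅ x, f x / g x) ≤ 1) :
    min (⨅ x, f x) (⨅ x, g x) / ((⨆ x, f x) * (⨆ x, g x)) * (⨆ x, |f x - g x|)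
      ≤ dH f g := by
  obtain ⟨x0⟩ := (inferInstance : Nonempty α)
  have hBf : BddBelow (Set.range f) := by
    by_contra h; rw [Real.iInf_of_not_bddBelow h] at hf; exact lt_irrefl 0 hf
  have hBg : BddBelow (Set.range g) := by
    by_contra h; rw [Real.iInf_of_not_bddBelow h] at hg; exact lt_irrefl 0 hg
  set A := ⨅ x, f x with hAdef
  set B := ⨅ x, g x with hBdef
  set F := ⨆ x, f x with hFdef
  set G := ⨆ x, g x with hGdef
  have hAf : ∀ x, A ≤ f x := fun x => ciInf_le hBf x
  have hBgx : ∀ x, B ≤ g x := fun x => ciInf_le hBg x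
  have hfF : ∀ x, f x ≤ F := fun x => le_ciSup hfb x
  have hgG : ∀ x, g x ≤ G := fun x => le_ciSup hgb x
  have hfpos : ∀ x, 0 < f x := fun x => lt_of_lt_of_le hf (hAf x)
  have hgpos : ∀ x, 0 < g x := fun x => lt_of_lt_of_le hg (hBgx x)
  have hFpos : 0 < F := lt_of_lt_of_le (hfpos x0) (hfF x0)
  have hGpos : 0 < G := lt_of_lt_of_le (hgpos x0) (hgG x0)
  have hub : ∀ x, f x / g x ≤ F / B :=
    fun x => div_le_div₀ hFpos.le (hfF x) hg (hBgx x)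
  have hlb : ∀ x, A / G ≤ f x / g x :=
    fun x => div_le_div₀ (hfpos x).le (hAf x) (hgpos x) (hgG x)
  have hrb : BddAbove (Set.range fun x => f x / g x) :=
    ⟨F / B, by rintro _ ⟨x, rfl⟩; exact hub x⟩
  have hrlb : BddBelow (Set.range fun x => f x / g x) :=
    ⟨A / G, by rintro _ ⟨x, rfl⟩; exact hlb x⟩
  set M := ⨆ x, f x / g x with hMdef
  set m := ⨅ x, f x / g x with hmdef
  have hMle : ∀ x, f x / g x ≤ M := fun x => le_ciSup hrb x
  have hmle : ∀ x, m ≤ f x / g x := fun x => ciInf_le hrlb x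
  have hMFB : M ≤ F / B := ciSup_le hub
  have hmAG : A / G ≤ m := le_ciInf hlb
  have hmpos : 0 < m := lt_of_lt_of_le (div_pos hf hGpos) hmAG
  have hMpos : 0 < M := lt_of_lt_of_le one_pos hsup
  have hBM : M * B ≤ F := (le_div_iff₀ hg).mp hMFB
  have hdH : dH f g = Real.log M - Real.log m := by
    rw [dH, ← hMdef, ← hmdef, Real.log_div hMpos.ne' hmpos.ne']
  have h1 : Real.log m ≤ m - 1 := Real.log_le_sub_one_of_pos hmpos
  have h2 : Real.log (1 / M) ≤ 1 / M - 1 :=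
    Real.log_le_sub_one_of_pos (by positivity)
  have h2' : 1 - 1 / M ≤ Real.log M := by
    rw [one_div, Real.log_inv] at h2; rw [one_div]; linarith
  have habs : ∀ x, |f x - g x| ≤ G * ((M - 1) + (1 - m)) := by
    intro x
    have h1x := hMle x
    have h2x := hmle x
    have hgx := hgpos x
    have hGx := hgG x
    have e : f x = g x * (f x / g x) := by field_simp
    rcases abs_cases (f x - g x) with ⟨h, _⟩ | ⟨h, _⟩ <;> rw [h] <;>
      nlinarith [mul_le_mul_of_nonneg_left h1x hgx.le,
        mul_le_mul_of_nonneg_left h2x hgx.le,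
        mul_le_mul_of_nonneg_right hGx (by linarith : (0:ℝ) ≤ M - 1),
        mul_le_mul_of_nonneg_right hGx (by linarith : (0:ℝ) ≤ 1 - m)]
  have hbdd : BddAbove (Set.range fun x => |f x - g x|) :=
    ⟨G * ((M - 1) + (1 - m)), by rintro _ ⟨x, rfl⟩; exact habs x⟩
  set S := ⨆ x, |f x - g x| with hSdef
  have hsupabs : S ≤ G * ((M - 1) + (1 - m)) := ciSup_le habs
  have hS0 : 0 ≤ S := le_trans (abs_nonneg _) (le_ciSup hbdd x0)
  have hminpos : 0 < min A B := lt_min hf hg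
  have hc0 : 0 ≤ min A B / (F * G) := by positivity
  have step1 : min A B / (F * G) * S ≤ min A B / (F * G) * (G * ((M - 1) + (1 - m))) :=
    mul_le_mul_of_nonneg_left hsupabs hc0
  have step2 : min A B / (F * G) * (G * ((M - 1) + (1 - m)))
      = min A B / F * (M - 1) + min A B / F * (1 - m) := by
    field_simp
  have k1 : min A B / F ≤ 1 / M := by
    rw [div_le_div_iff₀ hFpos hMpos]
    nlinarith [mul_le_mul_of_nonneg_left (min_le_right A B) hMpos.le, hBM]
  have k2 : min A B / F ≤ 1 := by
    rw [div_le_one hFpos]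
    exact le_trans (min_le_left A B) (le_trans (hAf x0) (hfF x0))
  have h31 : min A B / F * (M - 1) ≤ 1 / M * (M - 1) :=
    mul_le_mul_of_nonneg_right k1 (by linarith)
  have h32 : min A B / F * (1 - m) ≤ 1 - m :=
    mul_le_of_le_one_left (by linarith) k2
  have k4 : 1 / M * (M - 1) = 1 - 1 / M := by
    field_simp
  rw [hdH]
  calc min A B / (F * G) * S
      ≤ min A B / F * (M - 1) + min A B / F * (1 - m) := by rw [← step2]; exact step1
    _ ≤ (1 - 1 / M) + (1 - m) := by rw [← k4]; linarith
    _ ≤ Real.log M - Real.log m := by linarith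
end

section
/- Let f, g : S → (0,∞) be bounded and bounded away from zero, with g taking values in [a,b] for 0 < a < b. If sup_S (f/g)·1_{a ≤ f ≤ b} ≥ 1 and inf over {a ≤ f ≤ b} of f/g is ≤ 1, then the truncation T_{[a,b]}f (defined by clamping f pointwise to [a,b]) satisfies d_H(T_{[a,b]}f, g) ≤ d_H(f,g). -/
/-- Truncating `f` to `[a,b]` (pointwise clamping) does not increase the Hilbert
distance to `g` provided `g` takes values in `[a,b]`,
`sup_{a ≤ f ≤ b} (f/g) ≥ 1` and `inf_{a ≤ f ≤ b} (f/g) ≤ 1`. -/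
theorem stmt3 {α : Type*} [Nonempty α] (f g : α → ℝ) (a b : ℝ)
    (ha : 0 < a) (hab : a < b)
    (hfb : BddAbove (Set.range f)) (hf : 0 < ⨅ x, f x)
    (hg : ∀ x, a ≤ g x ∧ g x ≤ b)
    (hsup : 1 ≤ sSup ((fun x => f x / g x) '' {x | a ≤ f x ∧ f x ≤ b}))
    (hinf : sInf ((fun x => f x / g x) '' {x | a ≤ f x ∧ f x ≤ b}) ≤ 1) :
    dH (fun x => min (max (f x) a) b) g ≤ dH f g := by
  obtain ⟨x0⟩ := ‹Nonempty α›
  have hb : 0 < b := ha.trans hab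
  have hgpos : ∀ x, 0 < g x := fun x => lt_of_lt_of_le ha (hg x).1
  have hfbdd : BddBelow (Set.range f) := by
    by_contra h
    rw [Real.iInf_of_not_bddBelow h] at hf
    exact lt_irrefl 0 hf
  have hfpos : ∀ x, 0 < f x := fun x => lt_of_lt_of_le hf (ciInf_le hfbdd x)
  set T : α → ℝ := fun x => min (max (f x) a) b with hTdef
  set r : α → ℝ := fun x => f x / g x with hrdef
  set t : α → ℝ := fun x => T x / g x with htdef
  obtain ⟨M, hM⟩ := hfb
  have hM' : ∀ x, f x ≤ M := fun x => hM (Set.mem_range_self x)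
  have hM0 : 0 ≤ M := le_trans (hfpos x0).le (hM' x0)
  have hrBA : BddAbove (Set.range r) := ⟨M / a, by
    rintro _ ⟨x, rfl⟩
    exact div_le_div₀ hM0 (hM' x) ha (hg x).1⟩
  have hrBB : BddBelow (Set.range r) := ⟨(⨅ x, f x) / b, by
    rintro _ ⟨x, rfl⟩
    exact div_le_div₀ (hfpos x).le (ciInf_le hfbdd x) (hgpos x) (hg x).2⟩
  have hIr_pos : 0 < ⨅ x, r x := by
    have h1 : (⨅ x, f x) / b ≤ ⨅ x, r x :=
      le_ciInf fun x => div_le_div₀ (hfpos x).le (ciInf_le hfbdd x) (hgpos x) (hg x).2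
    exact lt_of_lt_of_le (div_pos hf hb) h1
  have hTmem : ∀ x, a ≤ T x ∧ T x ≤ b := fun x =>
    ⟨le_min (le_trans (le_max_right _ _) le_rfl) hab.le, min_le_right _ _⟩
  have htBA : BddAbove (Set.range t) := ⟨b / a, by
    rintro _ ⟨x, rfl⟩
    exact div_le_div₀ hb.le (hTmem x).2 ha (hg x).1⟩
  have htBB : BddBelow (Set.range t) := ⟨a / b, by
    rintro _ ⟨x, rfl⟩
    exact div_le_div₀ (ha.le.trans (hTmem x).1) (hTmem x).1 (hgpos x) (hg x).2⟩
  -- pointwise bounds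
  have hub : ∀ x, t x ≤ max (r x) 1 := by
    intro x
    have h1 : T x ≤ max (f x) (g x) :=
      le_trans (min_le_left _ _) (max_le_max le_rfl (hg x).1)
    have h2 : t x ≤ max (f x) (g x) / g x :=
      (div_le_div_iff_of_pos_right (hgpos x)).mpr h1
    rwa [← max_div_div_right (hgpos x).le, div_self (hgpos x).ne'] at h2
  have hlb : ∀ x, min (r x) 1 ≤ t x := by
    intro x
    have h1 : min (f x) (g x) ≤ T x :=
      le_min (le_trans (min_le_left _ _) (le_max_left _ _))
        (le_trans (min_le_right _ _) (hg x).2)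
    have h2 : min (f x) (g x) / g x ≤ t x :=
      (div_le_div_iff_of_pos_right (hgpos x)).mpr h1
    rwa [← min_div_div_right (hgpos x).le, div_self (hgpos x).ne'] at h2
  -- the image set is nonempty
  have him : ((fun x => f x / g x) '' {x | a ≤ f x ∧ f x ≤ b}).Nonempty := by
    by_contra h
    rw [Set.not_nonempty_iff_eq_empty] at h
    rw [h, Real.sSup_empty] at hsup
    linarith
  have hsub : (fun x => f x / g x) '' {x | a ≤ f x ∧ f x ≤ b} ⊆ Set.range r := by
    rintro _ ⟨x, hx, rfl⟩; exact Set.mem_range_self x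
  have hsupr : 1 ≤ ⨆ x, r x := le_trans hsup (csSup_le_csSup hrBA him hsub)
  have hinfr : (⨅ x, r x) ≤ 1 := le_trans (csInf_le_csInf hrBB him hsub) hinf
  have hsup_t : (⨆ x, t x) ≤ ⨆ x, r x :=
    ciSup_le fun x => (hub x).trans (max_le (le_ciSup hrBA x) hsupr)
  have hinf_t : (⨅ x, r x) ≤ ⨅ x, t x :=
    le_ciInf fun x => le_trans (le_min (ciInf_le hrBB x) hinfr) (hlb x)
  have hIt_pos : 0 < ⨅ x, t x := lt_of_lt_of_le hIr_pos hinf_t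
  have hSt_pos : 0 < ⨆ x, t x :=
    lt_of_lt_of_le hIt_pos (le_trans (ciInf_le htBB x0) (le_ciSup htBA x0))
  show Real.log ((⨆ x, t x) / (⨅ x, t x)) ≤ Real.log ((⨆ x, r x) / (⨅ x, r x))
  refine Real.log_le_log (div_pos hSt_pos hIt_pos) ?_
  exact div_le_div₀ (zero_le_one.trans hsupr) hsup_t hIr_pos hinf_t
end

section
/- If f and g are continuous strictly positive functions on a connected compact set S ⊂ ℝ^d of positive Lebesgue measure with equal L^p norms for some p ≥ 1, g takes values in [a,b] with 0 < a < b, and both are bounded away from zero, then d_H(T_{[a,b]}f, g) ≤ d_H(f,g), where T_{[a,b]} is pointwise truncation to [a,b]. -/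
open MeasureTheory

/-- Strict integral inequality for continuous functions on a compact set of positive measure. -/
theorem stmt5_aux_int {n : ℕ} (S : Set (EuclideanSpace ℝ (Fin n))) (hSc : IsCompact S)
    (hvol : 0 < volume S) (u v : EuclideanSpace ℝ (Fin n) → ℝ)
    (hu : ContinuousOn u S) (hv : ContinuousOn v S)
    (hlt : ∀ x ∈ S, u x < v x) : ∫ x in S, u x < ∫ x in S, v x := by
  have iu := hu.integrableOn_compact (μ := volume) hSc
  have iv := hv.integrableOn_compact (μ := volume) hSc
  have hpos : 0 < ∫ x in S, (v x - u x) := by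
    rw [setIntegral_pos_iff_support_of_nonneg_ae]
    · exact lt_of_lt_of_le hvol (measure_mono fun x hx =>
        ⟨sub_ne_zero.mpr (hlt x hx).ne', hx⟩)
    · exact (ae_restrict_iff' hSc.measurableSet).mpr
        (Filter.Eventually.of_forall fun x hx => sub_nonneg.mpr (hlt x hx).le)
    · exact iv.sub iu
  rw [integral_sub iv iu] at hpos
  linarith

/-- If `f, g` are continuous strictly positive on a connected compact `S` of
positive Lebesgue measure with equal `L^p` norms for some `p ≥ 1`, and `g` takes
values in `[a,b]` with `0 < a < b`, then pointwise truncation of `f` to `[a,b]`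
does not increase the Hilbert distance to `g`. -/
theorem stmt5 {n : ℕ} (S : Set (EuclideanSpace ℝ (Fin n)))
    (hSc : IsCompact S) (hconn : IsConnected S)
    (hvol : 0 < volume S)
    (f g : EuclideanSpace ℝ (Fin n) → ℝ)
    (hf : ContinuousOn f S) (hg : ContinuousOn g S)
    (hfp : ∀ x ∈ S, 0 < f x) (hgp : ∀ x ∈ S, 0 < g x)
    (p : ℝ) (hp : 1 ≤ p)
    (hint : ∫ x in S, f x ^ p = ∫ x in S, g x ^ p)
    (a b : ℝ) (ha : 0 < a) (hab : a < b)
    (hgab : ∀ x ∈ S, a ≤ g x ∧ g x ≤ b) :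
    dH (fun x : S => min (max (f x.1) a) b) (fun x : S => g x.1)
      ≤ dH (fun x : S => f x.1) (fun x : S => g x.1) := by
  have hSne : S.Nonempty := hconn.nonempty
  haveI : Nonempty S := hSne.to_subtype
  haveI : CompactSpace S := isCompact_iff_compactSpace.mp hSc
  have hppos : (0 : ℝ) < p := lt_of_lt_of_le one_pos hp
  have hfpc : ContinuousOn (fun x => f x ^ p) S :=
    hf.rpow_const fun x hx => Or.inl (hfp x hx).ne'
  have hgpc : ContinuousOn (fun x => g x ^ p) S :=
    hg.rpow_const fun x hx => Or.inl (hgp x hx).ne'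
  -- there is a point where f = g
  have hex : ∃ x ∈ S, f x = g x := by
    by_contra hne
    push_neg at hne
    have hcases : (∀ x ∈ S, f x < g x) ∨ (∀ x ∈ S, g x < f x) := by
      by_contra hc
      push_neg at hc
      obtain ⟨⟨x1, hx1, h1⟩, ⟨x2, hx2, h2⟩⟩ := hc
      obtain ⟨z, hz, hz'⟩ :=
        hconn.isPreconnected.intermediate_value₂ hx2 hx1 hf hg h2 h1
      exact hne z hz hz'
    rcases hcases with h | h
    · have := stmt5_aux_int S hSc hvol _ _ hfpc hgpc
        (fun x hx => Real.rpow_lt_rpow (hfp x hx).le (h x hx) hppos)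
      exact absurd hint this.ne
    · have := stmt5_aux_int S hSc hvol _ _ hgpc hfpc
        (fun x hx => Real.rpow_lt_rpow (hgp x hx).le (h x hx) hppos)
      exact absurd hint this.ne'
  obtain ⟨x0, hx0S, hx0⟩ := hex
  set F : S → ℝ := fun x => f x.1 / g x.1 with hFdef
  set T : S → ℝ := fun x => min (max (f x.1) a) b / g x.1 with hTdef
  have hg0 : ∀ x : S, 0 < g x.1 := fun x => hgp x x.2
  have hFpos : ∀ x : S, 0 < F x := fun x => div_pos (hfp x x.2) (hg0 x)
  have hFc : Continuous F :=
    (hf.restrict).div (hg.restrict) fun x => (hg0 x).ne'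
  obtain ⟨xmin, -, hxmin'⟩ := isCompact_univ.exists_isMinOn Set.univ_nonempty
    hFc.continuousOn
  obtain ⟨xmax, -, hxmax'⟩ := isCompact_univ.exists_isMaxOn Set.univ_nonempty
    hFc.continuousOn
  have hxmin : ∀ y, F xmin ≤ F y := fun y => hxmin' (Set.mem_univ y)
  have hxmax : ∀ y, F y ≤ F xmax := fun y => hxmax' (Set.mem_univ y)
  have bA : BddAbove (Set.range F) := ⟨F xmax, by rintro _ ⟨y, rfl⟩; exact hxmax y⟩
  have bB : BddBelow (Set.range F) := ⟨F xmin, by rintro _ ⟨y, rfl⟩; exact hxmin y⟩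
  have hF1 : F (⟨x0, hx0S⟩ : S) = 1 := by
    simp only [hFdef]
    rw [hx0]
    exact div_self (hg0 ⟨x0, hx0S⟩).ne'
  have hsup1 : 1 ≤ ⨆ x, F x := hF1 ▸ le_ciSup bA (⟨x0, hx0S⟩ : S)
  have hinf1 : ⨅ x, F x ≤ 1 := hF1 ▸ ciInf_le bB (⟨x0, hx0S⟩ : S)
  have hinfFpos : 0 < ⨅ x, F x :=
    lt_of_lt_of_le (hFpos xmin) (le_ciInf hxmin)
  -- pointwise bounds on T
  have key : ∀ x : S, min (F x) 1 ≤ T x ∧ T x ≤ max (F x) 1 := by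
    intro x
    have hgx : 0 < g x.1 := hg0 x
    have hga : a ≤ g x.1 := (hgab x x.2).1
    have hgb : g x.1 ≤ b := (hgab x x.2).2
    rcases le_total (f x.1) a with h | h
    · have hc : min (max (f x.1) a) b = a := by
        rw [max_eq_right h, min_eq_left hab.le]
      constructor
      · refine le_trans (min_le_left _ _) ?_
        simp only [hTdef, hc, hFdef]
        gcongr
      · refine le_trans ?_ (le_max_right _ _)
        simp only [hTdef, hc]
        exact (div_le_one hgx).mpr hga
    · rcases le_total (f x.1) b with h2 | h2
      · have hc : min (max (f x.1) a) b = f x.1 := by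
          rw [max_eq_left h, min_eq_left h2]
        simp only [hTdef, hc, hFdef]
        exact ⟨min_le_left _ _, le_max_left _ _⟩
      · have hc : min (max (f x.1) a) b = b := by
          rw [max_eq_left h, min_eq_right h2]
        constructor
        · refine le_trans (min_le_right _ _) ?_
          simp only [hTdef, hc]
          exact (one_le_div hgx).mpr hgb
        · refine le_trans ?_ (le_max_left _ _)
          simp only [hTdef, hc, hFdef]
          gcongr
  have hTub : ∀ x : S, T x ≤ ⨆ y, F y := fun x =>
    le_trans (key x).2 (max_le (le_ciSup bA x) hsup1)
  have hTlb : ∀ x : S, ⨅ y, F y ≤ T x := fun x =>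
    le_trans (le_min (ciInf_le bB x) hinf1) (key x).1
  have hTlo : ∀ x : S, a / b ≤ T x := by
    intro x
    have hgx : 0 < g x.1 := hg0 x
    have hga : a ≤ g x.1 := (hgab x x.2).1
    have hgb : g x.1 ≤ b := (hgab x x.2).2
    have hac : a ≤ min (max (f x.1) a) b := le_min (le_max_right _ _) (hga.trans hgb)
    exact div_le_div₀ (ha.le.trans hac) hac hgx hgb
  have bAT : BddAbove (Set.range T) := ⟨⨆ y, F y, by rintro _ ⟨y, rfl⟩; exact hTub y⟩
  have hsupT : ⨆ x, T x ≤ ⨆ x, F x := ciSup_le hTub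
  have hinfT : ⨅ x, F x ≤ ⨅ x, T x := le_ciInf hTlb
  have habpos : 0 < a / b := div_pos ha (ha.trans hab)
  have hinfTpos : 0 < ⨅ x, T x := lt_of_lt_of_le habpos (le_ciInf hTlo)
  have hsupTpos : 0 < ⨆ x, T x :=
    lt_of_lt_of_le habpos (le_trans (hTlo (⟨x0, hx0S⟩ : S)) (le_ciSup bAT _))
  simp only [dH]
  have hratio : (⨆ x, T x) / (⨅ x, T x) ≤ (⨆ x, F x) / (⨅ x, F x) :=
    div_le_div₀ (zero_le_one.trans hsup1) hsupT hinfFpos hinfT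
  exact Real.log_le_log (div_pos hsupTpos hinfTpos) hratio
end

section
/- Suppose the transition density q satisfies 0 < q_min ≤ q(0,x;T,z) ≤ q_max on S₀ × S_T with S₀ and S_T of finite positive Lebesgue measure, and g* : S_T → (0,∞) satisfies the Schrödinger fixed-point equation g*(z) = ∫_{S₀} ρ₀(x) q(0,x;T,z) / (∫_{S_T} q(0,x;T,z') ρ_T(z')/g*(z') dz') dx with ρ₀ a probability density on S₀, and the normalization ∫_{S_T} g*(z) dz = 1. Then q_min/Q_max ≤ g*(z) ≤ q_max/Q_min for all z ∈ S_T, where Q_T(x) = ∫_{S_T} q(0,x;T,z) dz and Q_min ≤ Q_T ≤ Q_max on S₀. -/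
/-!
Write `ν₀ = ρ₀ / D`, where `D(x) = ∫_{S_T} q(x,z') ρ_T(z') / g*(z') dz'`. The fixed-point
equation says that `g*(z) = ∫_{S₀} ν₀(x) q(x,z) dx` is a mixture of the kernel `q` with the
nonnegative weight `ν₀`, so `q_min I ≤ g* ≤ q_max I` with `I = ∫_{S₀} ν₀`. Integrating over `S_T`
and swapping the integrals turns `∫_{S_T} g* = 1` into `∫_{S₀} ν₀ Q_T = 1`, whence
`1 / Q_max ≤ I ≤ 1 / Q_min`.
-/

open MeasureTheory Function

variable {α β : Type*} [MeasurableSpace α] [MeasurableSpace β]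
  {μ : Measure α} {ν : Measure β} {s : Set α} {t : Set β} {w f : α → ℝ}

lemma mul_setIntegral_le_setIntegral_mul (hs : MeasurableSet s) (hw : IntegrableOn w s μ)
    (hwf : IntegrableOn (fun x => w x * f x) s μ) (hw0 : ∀ x ∈ s, 0 ≤ w x) {a : ℝ}
    (ha : ∀ x ∈ s, a ≤ f x) :
    a * ∫ x in s, w x ∂μ ≤ ∫ x in s, w x * f x ∂μ := by
  rw [← integral_const_mul]
  refine setIntegral_mono_on (hw.const_mul a) hwf hs fun x hx => ?_
  rw [mul_comm]
  exact mul_le_mul_of_nonneg_left (ha x hx) (hw0 x hx)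

lemma setIntegral_mul_le_mul_setIntegral (hs : MeasurableSet s) (hw : IntegrableOn w s μ)
    (hwf : IntegrableOn (fun x => w x * f x) s μ) (hw0 : ∀ x ∈ s, 0 ≤ w x) {b : ℝ}
    (hb : ∀ x ∈ s, f x ≤ b) :
    ∫ x in s, w x * f x ∂μ ≤ b * ∫ x in s, w x ∂μ := by
  rw [← integral_const_mul]
  refine setIntegral_mono_on hwf (hw.const_mul b) hs fun x hx => ?_
  rw [mul_comm b]
  exact mul_le_mul_of_nonneg_left (hb x hx) (hw0 x hx)

lemma IntegrableOn.mul_of_forall_norm_le (hs : MeasurableSet s) (hw : IntegrableOn w s μ)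
    (hf : AEStronglyMeasurable f (μ.restrict s)) {C : ℝ} (hC : ∀ x ∈ s, ‖f x‖ ≤ C) :
    IntegrableOn (fun x => w x * f x) s μ :=
  Integrable.mul_bdd (c := C) hw hf (ae_restrict_of_forall_mem hs hC)

lemma integrable_mul_kernel_prod [SFinite μ] [SFinite ν] [IsFiniteMeasure (ν.restrict t)]
    (hs : MeasurableSet s) (ht : MeasurableSet t) (hw : IntegrableOn w s μ)
    {q : α → β → ℝ} (hq : Measurable (uncurry q)) {C : ℝ}
    (hC : ∀ x ∈ s, ∀ z ∈ t, ‖q x z‖ ≤ C) :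
    Integrable (uncurry fun x z => w x * q x z) ((μ.restrict s).prod (ν.restrict t)) := by
  refine (hw.comp_fst (ν.restrict t)).mul_bdd (c := C) hq.aestronglyMeasurable ?_
  rw [Measure.prod_restrict]
  exact ae_restrict_of_forall_mem (hs.prod ht) fun p hp => hC p.1 hp.1 p.2 hp.2

theorem mixture_bounds_of_setIntegral_eq_one [SFinite μ] [SFinite ν] [IsFiniteMeasure (ν.restrict t)]
    (hs : MeasurableSet s) (ht : MeasurableSet t) (hw : IntegrableOn w s μ)
    (hw0 : ∀ x ∈ s, 0 ≤ w x) {q : α → β → ℝ} (hq : Measurable (uncurry q))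
    {qmin qmax Qmin Qmax : ℝ} (hqmin : 0 ≤ qmin)
    (hqb : ∀ x ∈ s, ∀ z ∈ t, qmin ≤ q x z ∧ q x z ≤ qmax) (hQmin : 0 < Qmin)
    (hQ : ∀ x ∈ s, Qmin ≤ ∫ z in t, q x z ∂ν ∧ ∫ z in t, q x z ∂ν ≤ Qmax)
    (hnorm : ∫ z in t, ∫ x in s, w x * q x z ∂μ ∂ν = 1) (z : β) (hz : z ∈ t) :
    qmin / Qmax ≤ ∫ x in s, w x * q x z ∂μ ∧ ∫ x in s, w x * q x z ∂μ ≤ qmax / Qmin := by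
  set I := ∫ x in s, w x ∂μ
  have hI : 0 ≤ I := setIntegral_nonneg hs hw0
  have hqnorm : ∀ x ∈ s, ∀ z ∈ t, ‖q x z‖ ≤ qmax := fun x hx z hz => by
    rw [Real.norm_of_nonneg (hqmin.trans (hqb x hx z hz).1)]
    exact (hqb x hx z hz).2
  have hprod := integrable_mul_kernel_prod (ν := ν) hs ht hw hq hqnorm
  have hmass : ∫ x in s, w x * ∫ z in t, q x z ∂ν ∂μ = 1 := by
    simpa only [← integral_const_mul, integral_integral_swap hprod] using hnorm
  have hwQ : IntegrableOn (fun x => w x * ∫ z in t, q x z ∂ν) s μ := by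
    simpa only [IntegrableOn, uncurry_apply_pair, integral_const_mul] using hprod.integral_prod_left
  have hwq : IntegrableOn (fun x => w x * q x z) s μ :=
    IntegrableOn.mul_of_forall_norm_le hs hw hq.of_uncurry_right.aestronglyMeasurable
      fun x hx => hqnorm x hx z hz
  have hlow := mul_setIntegral_le_setIntegral_mul hs hw hwq hw0 fun x hx => (hqb x hx z hz).1
  have hup := setIntegral_mul_le_mul_setIntegral hs hw hwq hw0 fun x hx => (hqb x hx z hz).2
  have hI_le : Qmin * I ≤ 1 :=
    hmass ▸ mul_setIntegral_le_setIntegral_mul hs hw hwQ hw0 fun x hx => (hQ x hx).1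
  have hI_ge : 1 ≤ Qmax * I :=
    hmass ▸ setIntegral_mul_le_mul_setIntegral hs hw hwQ hw0 fun x hx => (hQ x hx).2
  have hQmax : 0 < Qmax := by nlinarith
  have hIpos : 0 < I := by nlinarith
  have hqmax : 0 ≤ qmax := by nlinarith
  constructor
  · calc qmin / Qmax ≤ qmin * I := by
          rw [div_le_iff₀ hQmax, mul_assoc, mul_comm I]
          exact le_mul_of_one_le_right hqmin hI_ge
      _ ≤ _ := hlow
  · calc _ ≤ qmax * I := hup
      _ ≤ qmax / Qmin := by
          rw [le_div_iff₀ hQmin, mul_assoc, mul_comm I]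
          exact mul_le_of_le_one_right hqmax hI_le

theorem stmt6_general {n : ℕ} (S0 ST : Set (EuclideanSpace ℝ (Fin n)))
    (hS0c : IsCompact S0) (hSTc : IsCompact ST)
    (q : EuclideanSpace ℝ (Fin n) → EuclideanSpace ℝ (Fin n) → ℝ)
    (hqc : Continuous fun p : EuclideanSpace ℝ (Fin n) × EuclideanSpace ℝ (Fin n) => q p.1 p.2)
    (qmin qmax : ℝ) (hqmin : 0 < qmin)
    (hq : ∀ x ∈ S0, ∀ z ∈ ST, qmin ≤ q x z ∧ q x z ≤ qmax)
    (ρ0 ρT : EuclideanSpace ℝ (Fin n) → ℝ)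
    (hρ0 : ∀ x ∈ S0, 0 ≤ ρ0 x)
    (hρT : ∀ z ∈ ST, 0 ≤ ρT z)
    (Qmin Qmax : ℝ) (hQmin : 0 < Qmin)
    (hQ : ∀ x ∈ S0, Qmin ≤ (∫ z in ST, q x z) ∧ (∫ z in ST, q x z) ≤ Qmax)
    (g : EuclideanSpace ℝ (Fin n) → ℝ)
    (hgpos : ∀ z ∈ ST, 0 < g z)
    (hν : IntegrableOn (fun x => ρ0 x / (∫ z' in ST, q x z' * ρT z' / g z')) S0)
    (hfix : ∀ z ∈ ST,
      g z = ∫ x in S0, ρ0 x * q x z / (∫ z' in ST, q x z' * ρT z' / g z'))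
    (hnorm : ∫ z in ST, g z = 1) :
    ∀ z ∈ ST, qmin / Qmax ≤ g z ∧ g z ≤ qmax / Qmin := by
  have : IsFiniteMeasure (volume.restrict ST) :=
    isFiniteMeasure_restrict.2 hSTc.measure_lt_top.ne
  set D := fun x => ∫ z' in ST, q x z' * ρT z' / g z'
  have hD : ∀ x ∈ S0, 0 ≤ D x := fun x hx =>
    setIntegral_nonneg hSTc.measurableSet fun z hz =>
      div_nonneg (mul_nonneg (hqmin.le.trans (hq x hx z hz).1) (hρT z hz)) (hgpos z hz).le
  have hmix : ∀ z ∈ ST, g z = ∫ x in S0, ρ0 x / D x * q x z := fun z hz => by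
    simp only [hfix z hz, div_mul_eq_mul_div]
    rfl
  intro z hz
  rw [hmix z hz]
  refine mixture_bounds_of_setIntegral_eq_one hS0c.measurableSet hSTc.measurableSet hν
    (fun x hx => div_nonneg (hρ0 x hx) (hD x hx)) hqc.measurable hqmin.le hq hQmin hQ ?_ z hz
  rw [← hnorm]
  exact setIntegral_congr_fun hSTc.measurableSet fun z hz => (hmix z hz).symm

/-- A priori bounds on the normalized Schrödinger fixed point:
if `q_min ≤ q ≤ q_max`, `Q_min ≤ Q_T ≤ Q_max` and `g*` solves the Schrödinger
fixed-point equation with `∫_{S_T} g* = 1`, then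
`q_min/Q_max ≤ g* ≤ q_max/Q_min` on `S_T`. -/
theorem stmt6 {n : ℕ} (S0 ST : Set (EuclideanSpace ℝ (Fin n)))
    (hS0c : IsCompact S0) (hSTc : IsCompact ST)
    (hv0 : 0 < volume S0) (hvT : 0 < volume ST)
    (q : EuclideanSpace ℝ (Fin n) → EuclideanSpace ℝ (Fin n) → ℝ)
    (hqc : Continuous fun p : EuclideanSpace ℝ (Fin n) × EuclideanSpace ℝ (Fin n) => q p.1 p.2)
    (qmin qmax : ℝ) (hqmin : 0 < qmin)
    (hq : ∀ x ∈ S0, ∀ z ∈ ST, qmin ≤ q x z ∧ q x z ≤ qmax)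
    (ρ0 ρT : EuclideanSpace ℝ (Fin n) → ℝ)
    (hρ0m : Measurable ρ0) (hρTm : Measurable ρT)
    (hρ0 : ∀ x ∈ S0, 0 ≤ ρ0 x) (hρ0i : ∫ x in S0, ρ0 x = 1)
    (hρT : ∀ z ∈ ST, 0 ≤ ρT z) (hρTi : ∫ z in ST, ρT z = 1)
    (Qmin Qmax : ℝ) (hQmin : 0 < Qmin)
    (hQ : ∀ x ∈ S0, Qmin ≤ (∫ z in ST, q x z) ∧ (∫ z in ST, q x z) ≤ Qmax)
    (g : EuclideanSpace ℝ (Fin n) → ℝ) (hgm : Measurable g)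
    (hgpos : ∀ z ∈ ST, 0 < g z)
    (hD : ∀ x ∈ S0, IntegrableOn (fun z' => q x z' * ρT z' / g z') ST)
    (hν : IntegrableOn (fun x => ρ0 x / (∫ z' in ST, q x z' * ρT z' / g z')) S0)
    (hfix : ∀ z ∈ ST,
      g z = ∫ x in S0, ρ0 x * q x z / (∫ z' in ST, q x z' * ρT z' / g z'))
    (hnorm : ∫ z in ST, g z = 1) :
    ∀ z ∈ ST, qmin / Qmax ≤ g z ∧ g z ≤ qmax / Qmin :=
  stmt6_general S0 ST hS0c hSTc q hqc qmin qmax hqmin hq ρ0 ρT hρ0 hρT Qmin Qmax hQmin hQ g hgpos hν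
    hfix hnorm
end

section
/- Let K : ℝ → (0,∞) be an integral operator kernel on a compact set satisfying 0 < q_min ≤ K ≤ q_max. For any two strictly positive essentially bounded functions f, g bounded away from zero, the integral operator E(f)(x) = ∫ K(x,z) f(z) μ(dz) satisfies d_H(E(f), E(g)) ≤ tanh( (1/4) log(q_max²/q_min²) ) · d_H(f,g); in particular E is a strict contraction in the Hilbert metric. -/
/-!
Let `m ≤ f/g ≤ M = m s²`. Then `T = E(f - m g)` and `U = E(M g - f)` are nonnegative, and the
kernel bounds give `q_min T(x) ≤ q_max T(y)` and `q_min U(y) ≤ q_max U(x)` for all `x, y`.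
Since `E f / E g = (M T + m U) / (T + U)`, a polynomial inequality turns these into
`E f(x) / E g(x) ≤ θ² E f(y) / E g(y)` with `θ = (q_max s + q_min) / (q_max + q_min s)`, so
`d_H(E f, E g) ≤ 2 log θ`, while `d_H(f, g) = 2 log s`. Finally
`log θ ≤ (q_max - q_min) / (q_max + q_min) · log s`, the difference of the two sides being
monotone in `s` and zero at `s = 1`, and
`(q_max - q_min) / (q_max + q_min) = tanh (¼ log (q_max² / q_min²))`.
-/

open MeasureTheory

open Real Set

section BirkhoffFactor

variable {a c s : ℝ}

theorem birkhoff_poly_le (ha : 0 < a) (hac : a ≤ c) (hs : 1 ≤ s) {Tx Ty Ux Uy : ℝ}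
    (hTx : 0 ≤ Tx) (hTy : 0 ≤ Ty) (hUy : 0 ≤ Uy)
    (hT : a * Tx ≤ c * Ty) (hU : a * Uy ≤ c * Ux) :
    (c + a * s) ^ 2 * ((s ^ 2 * Tx + Ux) * (Ty + Uy)) ≤
      (c * s + a) ^ 2 * ((s ^ 2 * Ty + Uy) * (Tx + Ux)) := by
  have hc : 0 < c := ha.trans_le hac
  have hX : 0 ≤ c * (s ^ 2 * (Tx * Ty) + Ux * Uy) - 2 * s * a * (Tx * Uy) := by
    nlinarith [mul_nonneg (mul_nonneg (sq_nonneg s) hTx) (sub_nonneg.2 hT),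
      mul_nonneg hUy (sub_nonneg.2 hU), mul_nonneg ha.le (sq_nonneg (s * Tx - Uy))]
  have hY : 0 ≤ c ^ 2 * (Ty * Ux) - a ^ 2 * (Tx * Uy) := by
    nlinarith [mul_le_mul hT hU (by positivity) (by positivity)]
  have key : c * ((c * s + a) ^ 2 * ((s ^ 2 * Ty + Uy) * (Tx + Ux)) -
        (c + a * s) ^ 2 * ((s ^ 2 * Tx + Ux) * (Ty + Uy))) =
      (s ^ 2 - 1) * ((c ^ 2 - a ^ 2) * (c * (s ^ 2 * (Tx * Ty) + Ux * Uy) - 2 * s * a * (Tx * Uy)) +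
        (c * s ^ 2 + 2 * a * s + c) * (c ^ 2 * (Ty * Ux) - a ^ 2 * (Tx * Uy))) := by
    ring
  have hs2 : 0 ≤ s ^ 2 - 1 := by nlinarith
  have hca : 0 ≤ c ^ 2 - a ^ 2 := by nlinarith
  have : 0 ≤ c * ((c * s + a) ^ 2 * ((s ^ 2 * Ty + Uy) * (Tx + Ux)) -
      (c + a * s) ^ 2 * ((s ^ 2 * Tx + Ux) * (Ty + Uy))) := by
    rw [key]; positivity
  exact sub_nonneg.1 ((mul_nonneg_iff_of_pos_left hc).1 this)

theorem div_le_birkhoff_factor_sq_mul_div (ha : 0 < a) (hac : a ≤ c) (hs : 1 ≤ s)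
    {m Px Py Qx Qy : ℝ} (hm : 0 < m) (hQx : 0 < Qx) (hQy : 0 < Qy)
    (hx : m * Qx ≤ Px ∧ Px ≤ m * s ^ 2 * Qx) (hy : m * Qy ≤ Py ∧ Py ≤ m * s ^ 2 * Qy)
    (hT : a * (Px - m * Qx) ≤ c * (Py - m * Qy))
    (hU : a * (m * s ^ 2 * Qy - Py) ≤ c * (m * s ^ 2 * Qx - Px)) :
    Px / Qx ≤ ((c * s + a) / (c + a * s)) ^ 2 * (Py / Qy) := by
  have hc : 0 < c := ha.trans_le hac
  rcases hs.eq_or_lt with rfl | hs1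
  · obtain rfl : Px = m * Qx := by linarith [hx.1, hx.2]
    obtain rfl : Py = m * Qy := by linarith [hy.1, hy.2]
    rw [mul_div_cancel_right₀ _ hQx.ne', mul_div_cancel_right₀ _ hQy.ne']
    simp only [mul_one, div_self (by positivity : c + a ≠ 0), one_pow, one_mul, le_refl]
  · have hpoly := birkhoff_poly_le ha hac hs (sub_nonneg.2 hx.1) (sub_nonneg.2 hy.1)
      (sub_nonneg.2 hy.2) hT hU
    have hk : 0 < m * (s ^ 2 - 1) ^ 2 := by
      have : 0 < s ^ 2 - 1 := by nlinarith
      positivity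
    -- for `T = P - m Q`, `U = m s² Q - P`: `s² T + U = (s² - 1) P` and `T + U = m (s² - 1) Q`
    have hcross : (c + a * s) ^ 2 * (Px * Qy) ≤ (c * s + a) ^ 2 * (Py * Qx) :=
      le_of_mul_le_mul_left (by linear_combination hpoly) hk
    rw [div_pow, div_mul_div_comm, div_le_div_iff₀ hQx (by positivity)]
    linarith

theorem log_birkhoff_factor_le (ha : 0 < a) (hac : a ≤ c) (hs : 1 ≤ s) :
    log ((c * s + a) / (c + a * s)) ≤ (c - a) / (c + a) * log s := by
  have hc : 0 < c := ha.trans_le hac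
  set L := (c - a) / (c + a)
  set φ : ℝ → ℝ := fun t => L * log t - log (c * t + a) + log (c + a * t)
  have hderiv : ∀ t, 0 < t →
      HasDerivAt φ (L * t⁻¹ - (c * t + a)⁻¹ * c + (c + a * t)⁻¹ * a) t := by
    intro t ht
    have h₁ : HasDerivAt (fun t => c * t + a) c t := by
      simpa using ((hasDerivAt_id t).const_mul c).add_const a
    have h₂ : HasDerivAt (fun t => c + a * t) a t := by
      simpa using ((hasDerivAt_id t).const_mul a).const_add c
    exact (((hasDerivAt_log ht.ne').const_mul L).sub
      ((hasDerivAt_log (by positivity)).comp t h₁)).add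
      ((hasDerivAt_log (by positivity)).comp t h₂)
  have hmono : MonotoneOn φ (Ici 1) := by
    refine monotoneOn_of_hasDerivWithinAt_nonneg (convex_Ici 1)
      (fun t ht => (hderiv t (zero_lt_one.trans_le ht)).continuousAt.continuousWithinAt)
      (fun t ht => (hderiv t ?_).hasDerivWithinAt) fun t ht => ?_
    all_goals rw [interior_Ici] at ht
    · exact zero_lt_one.trans ht
    have ht0 : 0 < t := zero_lt_one.trans ht
    have : L * t⁻¹ - (c * t + a)⁻¹ * c + (c + a * t)⁻¹ * a =
        (c - a) * a * c * (t - 1) ^ 2 / ((c + a) * (t * ((c * t + a) * (c + a * t)))) := by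
      simp only [L]; field_simp; ring
    rw [this]
    have : 0 ≤ c - a := sub_nonneg.2 hac
    positivity
  have h := hmono self_mem_Ici hs hs
  have hs0 : 0 < s := zero_lt_one.trans_le hs
  simp only [φ, log_one, mul_zero, mul_one, zero_sub] at h
  rw [log_div (by positivity) (by positivity)]
  linarith

theorem tanh_quarter_log_sq_div_sq (ha : 0 < a) (hc : 0 < c) :
    tanh (1 / 4 * log (c ^ 2 / a ^ 2)) = (c - a) / (c + a) := by
  have hmem : (c - a) / (c + a) ∈ Ioo (-1) 1 := by
    constructor
    · rw [lt_div_iff₀ (by positivity)]; linarith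
    · rw [div_lt_iff₀ (by positivity)]; linarith
  have : 1 / 4 * log (c ^ 2 / a ^ 2) = artanh ((c - a) / (c + a)) := by
    rw [artanh_eq_half_log (Ioo_subset_Icc_self hmem), ← div_pow, log_pow]
    have : (1 + (c - a) / (c + a)) / (1 - (c - a) / (c + a)) = c / a := by
      field_simp [ha.ne']
      ring
    rw [this]; push_cast; ring
  rw [this, tanh_artanh hmem]

theorem log_birkhoff_factor_sq_le (ha : 0 < a) (hac : a ≤ c) (hs : 1 ≤ s) :
    log (((c * s + a) / (c + a * s)) ^ 2) ≤ tanh (1 / 4 * log (c ^ 2 / a ^ 2)) * log (s ^ 2) := by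
  rw [tanh_quarter_log_sq_div_sq ha (ha.trans_le hac), log_pow, log_pow]
  push_cast
  linarith [log_birkhoff_factor_le ha hac hs]

end BirkhoffFactor

theorem dH_le_log_of_div_le {α : Type*} [Nonempty α] {f g : α → ℝ} {d : ℝ}
    (hpos : ∀ x, 0 < f x / g x) (h : ∀ x y, f x / g x ≤ d * (f y / g y)) :
    dH f g ≤ log d := by
  obtain ⟨x₀⟩ := ‹Nonempty α›
  have hd : 0 < d := pos_of_mul_pos_left ((hpos x₀).trans_le (h x₀ x₀)) (hpos x₀).le
  have hinf : f x₀ / g x₀ / d ≤ ⨅ y, f y / g y :=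
    le_ciInf fun y => (div_le_iff₀' hd).2 (h x₀ y)
  have hsup : (⨆ x, f x / g x) ≤ d * ⨅ y, f y / g y :=
    ciSup_le fun x => (div_le_iff₀' hd).1 (le_ciInf fun y => (div_le_iff₀' hd).2 (h x y))
  have hinf_pos : 0 < ⨅ y, f y / g y := (div_pos (hpos x₀) hd).trans_le hinf
  have hsup_pos : 0 < ⨆ x, f x / g x :=
    (hpos x₀).trans_le (le_ciSup ⟨d * (f x₀ / g x₀), by rintro _ ⟨x, rfl⟩; exact h x x₀⟩ x₀)
  exact log_le_log (div_pos hsup_pos hinf_pos) ((div_le_iff₀ hinf_pos).2 hsup)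

theorem bddBelow_range_of_iInf_pos {ι : Type*} {f : ι → ℝ} (h : 0 < ⨅ i, f i) :
    BddBelow (range f) := by
  by_contra hb
  rw [Real.iInf_of_not_bddBelow hb] at h
  exact h.false

theorem pos_of_iInf_pos {ι : Type*} {f : ι → ℝ} (h : 0 < ⨅ i, f i) (i : ι) : 0 < f i :=
  h.trans_le (ciInf_le (bddBelow_range_of_iInf_pos h) i)

theorem exists_dH_eq_log_div {β : Type*} [Nonempty β] {f g : β → ℝ}
    (hfb : BddAbove (range f)) (hgb : BddAbove (range g))
    (hf : 0 < ⨅ z, f z) (hg : 0 < ⨅ z, g z) :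
    ∃ m M, 0 < m ∧ m ≤ M ∧ (∀ z, m * g z ≤ f z ∧ f z ≤ M * g z) ∧ dH f g = log (M / m) := by
  obtain ⟨z₀⟩ := ‹Nonempty β›
  have hgz := pos_of_iInf_pos hg
  have hlo : ∀ z, (⨅ z, f z) / ⨆ z, g z ≤ f z / g z := fun z =>
    div_le_div₀ (pos_of_iInf_pos hf z).le (ciInf_le (bddBelow_range_of_iInf_pos hf) z)
      (hgz z) (le_ciSup hgb z)
  have hhi : ∀ z, f z / g z ≤ (⨆ z, f z) / ⨅ z, g z := fun z =>
    div_le_div₀ ((pos_of_iInf_pos hf z).trans_le (le_ciSup hfb z)).le (le_ciSup hfb z) hg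
      (ciInf_le (bddBelow_range_of_iInf_pos hg) z)
  have hbdd : BddBelow (range fun z => f z / g z) := ⟨_, forall_mem_range.2 hlo⟩
  have hbdd' : BddAbove (range fun z => f z / g z) := ⟨_, forall_mem_range.2 hhi⟩
  refine ⟨⨅ z, f z / g z, ⨆ z, f z / g z, ?_, (ciInf_le hbdd z₀).trans (le_ciSup hbdd' z₀),
    fun z => ⟨?_, ?_⟩, rfl⟩
  · exact (div_pos hf ((hgz z₀).trans_le (le_ciSup hgb z₀))).trans_le (le_ciInf hlo)
  · exact (le_div_iff₀ (hgz z)).1 (ciInf_le hbdd z)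
  · exact (div_le_iff₀ (hgz z)).1 (le_ciSup hbdd' z)

section Kernel

variable {β : Type*} [MeasurableSpace β] {μ : Measure β} {k k₁ k₂ u v : β → ℝ} {a c : ℝ}

theorem integrable_mul_of_bounds (ha : 0 ≤ a) (hk : ∀ z, a ≤ k z ∧ k z ≤ c)
    (hkm : Measurable k) (hu : Integrable u μ) : Integrable (fun z => k z * u z) μ :=
  hu.bdd_mul hkm.aestronglyMeasurable <| ae_of_all _ fun z => by
    rw [Real.norm_of_nonneg (ha.trans (hk z).1)]
    exact (hk z).2

theorem const_mul_integral_sub_le (ha : 0 ≤ a) (hk₁ : ∀ z, a ≤ k₁ z ∧ k₁ z ≤ c)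
    (hk₂ : ∀ z, a ≤ k₂ z ∧ k₂ z ≤ c) (hk₁m : Measurable k₁) (hk₂m : Measurable k₂)
    (hu : Integrable u μ) (hv : Integrable v μ) (hvu : ∀ z, v z ≤ u z) :
    a * (∫ z, k₁ z * u z ∂μ - ∫ z, k₁ z * v z ∂μ) ≤
      c * (∫ z, k₂ z * u z ∂μ - ∫ z, k₂ z * v z ∂μ) := by
  have hsub : ∀ {k}, (∀ z, a ≤ k z ∧ k z ≤ c) → Measurable k →
      ∫ z, k z * u z ∂μ - ∫ z, k z * v z ∂μ = ∫ z, k z * (u z - v z) ∂μ := fun hk hkm => by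
    rw [← integral_sub (integrable_mul_of_bounds ha hk hkm hu)
      (integrable_mul_of_bounds ha hk hkm hv)]
    simp_rw [mul_sub]
  rw [hsub hk₁ hk₁m, hsub hk₂ hk₂m, ← integral_const_mul, ← integral_const_mul]
  refine integral_mono ((integrable_mul_of_bounds ha hk₁ hk₁m (hu.sub hv)).const_mul a)
    ((integrable_mul_of_bounds ha hk₂ hk₂m (hu.sub hv)).const_mul c) fun z => ?_
  have : a * k₁ z ≤ c * k₂ z := by nlinarith [hk₁ z, hk₂ z]
  simpa only [mul_assoc] using mul_le_mul_of_nonneg_right this (sub_nonneg.2 (hvu z))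

theorem integrable_of_nonneg_of_bddAbove [IsFiniteMeasure μ] (hum : Measurable u)
    (hu : ∀ z, 0 ≤ u z) (hb : BddAbove (range u)) : Integrable u μ :=
  .of_bound hum.aestronglyMeasurable _ <| ae_of_all _ fun z => by
    rw [norm_of_nonneg (hu z)]
    exact le_ciSup hb z

theorem integral_mul_pos (hμ : μ ≠ 0) (ha : 0 < a) (hk : ∀ z, a ≤ k z ∧ k z ≤ c)
    (hkm : Measurable k) (hu : Integrable u μ) (hpos : ∀ z, 0 < u z) :
    0 < ∫ z, k z * u z ∂μ := by
  have hku z : 0 < k z * u z := mul_pos (ha.trans_le (hk z).1) (hpos z)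
  rw [integral_pos_iff_support_of_nonneg (fun z => (hku z).le)
      (integrable_mul_of_bounds ha.le hk hkm hu), Function.support_eq_univ fun z => (hku z).ne']
  exact Measure.measure_univ_pos.2 hμ

theorem integral_mul_mono (ha : 0 ≤ a) (hk : ∀ z, a ≤ k z ∧ k z ≤ c) (hkm : Measurable k)
    (hu : Integrable u μ) (hv : Integrable v μ) (hvu : ∀ z, v z ≤ u z) :
    ∫ z, k z * v z ∂μ ≤ ∫ z, k z * u z ∂μ :=
  integral_mono (integrable_mul_of_bounds ha hk hkm hv) (integrable_mul_of_bounds ha hk hkm hu)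
    fun z => mul_le_mul_of_nonneg_left (hvu z) (ha.trans (hk z).1)

theorem integral_mul_div_le_birkhoff_factor_sq_mul {f g : β → ℝ} {m s : ℝ} (hμ : μ ≠ 0)
    (ha : 0 < a) (hac : a ≤ c) (hk₁ : ∀ z, a ≤ k₁ z ∧ k₁ z ≤ c)
    (hk₂ : ∀ z, a ≤ k₂ z ∧ k₂ z ≤ c) (hk₁m : Measurable k₁) (hk₂m : Measurable k₂)
    (hf : Integrable f μ) (hg : Integrable g μ) (hgpos : ∀ z, 0 < g z) (hm : 0 < m)
    (hs : 1 ≤ s) (hfg : ∀ z, m * g z ≤ f z ∧ f z ≤ m * s ^ 2 * g z) :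
    (∫ z, k₁ z * f z ∂μ) / (∫ z, k₁ z * g z ∂μ) ≤
      ((c * s + a) / (c + a * s)) ^ 2 * ((∫ z, k₂ z * f z ∂μ) / ∫ z, k₂ z * g z ∂μ) := by
  have hgm := hg.const_mul m
  have hgM := hg.const_mul (m * s ^ 2)
  have hfg₁ z := (hfg z).1
  have hfg₂ z := (hfg z).2
  have h₁ := integral_mul_mono ha.le hk₁ hk₁m hf hgm hfg₁
  have h₂ := integral_mul_mono ha.le hk₁ hk₁m hgM hf hfg₂
  have h₃ := integral_mul_mono ha.le hk₂ hk₂m hf hgm hfg₁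
  have h₄ := integral_mul_mono ha.le hk₂ hk₂m hgM hf hfg₂
  have hT := const_mul_integral_sub_le ha.le hk₁ hk₂ hk₁m hk₂m hf hgm hfg₁
  have hU := const_mul_integral_sub_le ha.le hk₂ hk₁ hk₂m hk₁m hgM hf hfg₂
  simp only [mul_left_comm (k₁ _), mul_left_comm (k₂ _), integral_const_mul] at h₁ h₂ h₃ h₄ hT hU
  exact div_le_birkhoff_factor_sq_mul_div ha hac hs hm
    (integral_mul_pos hμ ha hk₁ hk₁m hg hgpos) (integral_mul_pos hμ ha hk₂ hk₂m hg hgpos)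
    ⟨h₁, h₂⟩ ⟨h₃, h₄⟩ hT hU

end Kernel

/-- Birkhoff contraction: an integral operator with kernel bounded between
`q_min` and `q_max` contracts the Hilbert metric with coefficient
`tanh((1/4) log(q_max²/q_min²))`. -/
theorem stmt7 {α β : Type*} [Nonempty α] [Nonempty β] [MeasurableSpace β]
    (μ : Measure β) [IsFiniteMeasure μ] (hμ : μ ≠ 0)
    (K : α → β → ℝ) (qmin qmax : ℝ) (hqmin : 0 < qmin)
    (hK : ∀ x z, qmin ≤ K x z ∧ K x z ≤ qmax)
    (hKm : ∀ x, Measurable (K x))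
    (f g : β → ℝ) (hfm : Measurable f) (hgm : Measurable g)
    (hfb : BddAbove (Set.range f)) (hgb : BddAbove (Set.range g))
    (hf : 0 < ⨅ z, f z) (hg : 0 < ⨅ z, g z) :
    dH (fun x => ∫ z, K x z * f z ∂μ) (fun x => ∫ z, K x z * g z ∂μ)
      ≤ Real.tanh ((1 / 4) * Real.log (qmax ^ 2 / qmin ^ 2)) * dH f g := by
  obtain ⟨x₀⟩ := ‹Nonempty α›
  obtain ⟨z₀⟩ := ‹Nonempty β›
  have hq : qmin ≤ qmax := (hK x₀ z₀).1.trans (hK x₀ z₀).2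
  obtain ⟨m, M, hm, hmM, hfg, hdH⟩ := exists_dH_eq_log_div hfb hgb hf hg
  obtain ⟨s, hs, rfl⟩ : ∃ s, 1 ≤ s ∧ M = m * s ^ 2 :=
    ⟨√(M / m), one_le_sqrt.2 ((one_le_div hm).2 hmM), by
      rw [sq_sqrt (div_pos (hm.trans_le hmM) hm).le, mul_div_cancel₀ _ hm.ne']⟩
  rw [hdH, mul_div_cancel_left₀ _ hm.ne']
  have hfi : Integrable f μ :=
    integrable_of_nonneg_of_bddAbove hfm (fun z => (pos_of_iInf_pos hf z).le) hfb
  have hgi : Integrable g μ :=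
    integrable_of_nonneg_of_bddAbove hgm (fun z => (pos_of_iInf_pos hg z).le) hgb
  have hpos x : 0 < (∫ z, K x z * f z ∂μ) / ∫ z, K x z * g z ∂μ :=
    div_pos (integral_mul_pos hμ hqmin (hK x) (hKm x) hfi (pos_of_iInf_pos hf))
      (integral_mul_pos hμ hqmin (hK x) (hKm x) hgi (pos_of_iInf_pos hg))
  refine (dH_le_log_of_div_le hpos fun x y => ?_).trans (log_birkhoff_factor_sq_le hqmin hq hs)
  exact integral_mul_div_le_birkhoff_factor_sq_mul hμ hqmin hq (hK x) (hK y) (hKm x) (hKm y)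
    hfi hgi (pos_of_iInf_pos hg) hm hs hfg
end

section
/- If d_H(ĝ_k, g*) ≤ ε, where ĝ_k and g* are continuous strictly positive functions on a compact set S_T, both bounded in [g_min, g_max] with 0 < g_min ≤ g_max, and both integrate to 1 over S_T (S_T connected compact with positive Lebesgue measure), then ‖ĝ_k − g*‖_∞ ≤ (g_max²/g_min) · ε·e^ε in terms of the Hilbert metric bound; in particular sup-norm error is controlled by a constant times the Hilbert distance. -/
/-!
Equal integrals force `f` and `g` to cross somewhere on the connected set `S`, so the ratio `f/g`
takes the value `1` and `inf (f/g) ≤ 1 ≤ sup (f/g)`. Then `d_H(f,g) ≤ ε` pins the ratio inside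
`[e^{-ε}, e^ε]`, whence `|f - g| ≤ (e^ε - 1) g ≤ ε e^ε g_max ≤ (g_max²/g_min) ε e^ε`.
-/

open MeasureTheory

section Crossing

variable {α : Type*} [TopologicalSpace α] [T2Space α] [MeasurableSpace α] [OpensMeasurableSpace α]
  {μ : Measure α} [IsFiniteMeasureOnCompacts μ] {S : Set α} {f g : α → ℝ}

theorem setIntegral_lt_setIntegral_of_forall_lt (hS : IsCompact S) (hμ : μ S ≠ 0)
    (hf : ContinuousOn f S) (hg : ContinuousOn g S) (hlt : ∀ x ∈ S, f x < g x) :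
    ∫ x in S, f x ∂μ < ∫ x in S, g x ∂μ := by
  have hfi := hf.integrableOn_compact (μ := μ) hS
  have hgi := hg.integrableOn_compact (μ := μ) hS
  have hpos : ∀ x ∈ S, 0 < g x - f x := fun x hx => sub_pos.2 (hlt x hx)
  have hsupp : Function.support (fun x => g x - f x) ∩ S = S :=
    Set.inter_eq_right.2 fun x hx => (hpos x hx).ne'
  rw [← sub_pos, ← integral_sub hgi hfi,
    setIntegral_pos_iff_support_of_nonneg_ae (f := fun x => g x - f x) _ (hgi.sub hfi), hsupp]
  · exact pos_iff_ne_zero.2 hμ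
  · exact (ae_restrict_mem hS.measurableSet).mono fun x hx => (hpos x hx).le

theorem IsPreconnected.exists_eq_of_setIntegral_eq (hconn : IsPreconnected S) (hS : IsCompact S)
    (hμ : μ S ≠ 0) (hf : ContinuousOn f S) (hg : ContinuousOn g S)
    (heq : ∫ x in S, f x ∂μ = ∫ x in S, g x ∂μ) : ∃ x ∈ S, f x = g x := by
  have hle : ∃ a ∈ S, f a ≤ g a := by
    by_contra! h
    exact (setIntegral_lt_setIntegral_of_forall_lt hS hμ hg hf h).ne' heq
  have hge : ∃ b ∈ S, g b ≤ f b := by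
    by_contra! h
    exact (setIntegral_lt_setIntegral_of_forall_lt hS hμ hf hg h).ne heq
  obtain ⟨a, ha, hab⟩ := hle
  obtain ⟨b, hb, hba⟩ := hge
  exact hconn.intermediate_value₂ ha hb hf hg hab hba

end Crossing

section HilbertMetric

open Real

theorem exp_neg_le_and_le_exp_of_log_iSup_div_iInf_le {ι : Type*} {r : ι → ℝ} {c ε : ℝ}
    (hc : 0 < c) (hlow : ∀ i, c ≤ r i) (hbdd : BddAbove (Set.range r)) {i₀ : ι}
    (hi₀ : r i₀ = 1) (hε : log ((⨆ i, r i) / ⨅ i, r i) ≤ ε) (i : ι) :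
    exp (-ε) ≤ r i ∧ r i ≤ exp ε := by
  have : Nonempty ι := ⟨i₀⟩
  set M := ⨆ i, r i
  set m := ⨅ i, r i
  have hbdd' : BddBelow (Set.range r) := ⟨c, Set.forall_mem_range.2 hlow⟩
  have hm : 0 < m := hc.trans_le (le_ciInf hlow)
  have hm1 : m ≤ 1 := hi₀ ▸ ciInf_le hbdd' i₀
  have hM1 : 1 ≤ M := hi₀ ▸ le_ciSup hbdd i₀
  have hMm : M ≤ exp ε * m := by
    rwa [← div_le_iff₀ hm, ← log_le_iff_le_exp (by positivity)]
  constructor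
  · calc exp (-ε) ≤ exp (-ε) * M := le_mul_of_one_le_right (exp_pos _).le hM1
      _ ≤ exp (-ε) * (exp ε * m) := by gcongr
      _ = m := by rw [← mul_assoc, ← exp_add, neg_add_cancel, exp_zero, one_mul]
      _ ≤ r i := ciInf_le hbdd' i
  · calc r i ≤ M := le_ciSup hbdd i
      _ ≤ exp ε * m := hMm
      _ ≤ exp ε := mul_le_of_le_one_right (exp_pos _).le hm1

theorem exp_neg_mul_le_and_le_exp_mul_of_dH_le {α : Type*} {f g : α → ℝ} {a b ε : ℝ}
    (ha : 0 < a) (hf : ∀ x, a ≤ f x ∧ f x ≤ b) (hg : ∀ x, a ≤ g x ∧ g x ≤ b)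
    {x₀ : α} (hx₀ : f x₀ = g x₀) (hd : dH f g ≤ ε) (x : α) :
    exp (-ε) * g x ≤ f x ∧ f x ≤ exp ε * g x := by
  have hb : 0 < b := ha.trans_le ((hg x).1.trans (hg x).2)
  have hlow (y : α) : a / b ≤ f y / g y :=
    div_le_div₀ (ha.le.trans (hf y).1) (hf y).1 (ha.trans_le (hg y).1) (hg y).2
  have hup (y : α) : f y / g y ≤ b / a :=
    div_le_div₀ hb.le (hf y).2 ha (hg y).1
  have hratio := exp_neg_le_and_le_exp_of_log_iSup_div_iInf_le (r := fun y => f y / g y)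
    (div_pos ha hb) hlow ⟨b / a, Set.forall_mem_range.2 hup⟩
    (by rw [hx₀, div_self (ha.trans_le (hg x₀).1).ne']) hd x
  have hgx : 0 < g x := ha.trans_le (hg x).1
  rwa [le_div_iff₀ hgx, div_le_iff₀ hgx] at hratio

theorem abs_sub_le_mul_exp_mul_of_exp_neg_mul_le_of_le_exp_mul {s t ε : ℝ} (ht : 0 < t)
    (hlow : exp (-ε) * t ≤ s) (hup : s ≤ exp ε * t) : |s - t| ≤ ε * exp ε * t := by
  have hε : 0 ≤ ε := by
    have := exp_le_exp.1 ((mul_le_mul_iff_left₀ ht).1 (hlow.trans hup))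
    linarith
  have hneg : 1 - exp (-ε) ≤ ε := by linarith [add_one_le_exp (-ε)]
  have hpos : exp ε - 1 ≤ ε * exp ε := by
    calc exp ε - 1 = exp ε * (1 - exp (-ε)) := by
          rw [mul_sub, mul_one, ← exp_add, add_neg_cancel, exp_zero]
      _ ≤ exp ε * ε := by gcongr
      _ = ε * exp ε := mul_comm _ _
  rw [abs_sub_le_iff]
  constructor
  · calc s - t ≤ (exp ε - 1) * t := by linarith
      _ ≤ ε * exp ε * t := by gcongr
  · calc t - s ≤ (1 - exp (-ε)) * t := by linarith
      _ ≤ ε * t := by gcongr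
      _ ≤ ε * exp ε * t := by gcongr; exact le_mul_of_one_le_right hε (one_le_exp hε)

end HilbertMetric

/-- Sup-norm error controlled by the Hilbert distance: if `f = ĝ_k` and `g = g*`
are continuous, take values in `[g_min, g_max]`, integrate to `1` on the
connected compact set `S` of positive Lebesgue measure, and `d_H(f,g) ≤ ε`, then
`‖f − g‖_∞ ≤ (g_max²/g_min) ε e^ε`. -/
theorem stmt11 {n : ℕ} (S : Set (EuclideanSpace ℝ (Fin n)))
    (hSc : IsCompact S) (hconn : IsConnected S) (hvol : 0 < volume S)
    (f g : EuclideanSpace ℝ (Fin n) → ℝ)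
    (hf : ContinuousOn f S) (hg : ContinuousOn g S)
    (gmin gmax : ℝ) (hgmin : 0 < gmin) (hmm : gmin ≤ gmax)
    (hfb : ∀ x ∈ S, gmin ≤ f x ∧ f x ≤ gmax)
    (hgb : ∀ x ∈ S, gmin ≤ g x ∧ g x ≤ gmax)
    (hfi : ∫ x in S, f x = 1) (hgi : ∫ x in S, g x = 1)
    (ε : ℝ)
    (hd : dH (fun x : S => f x.1) (fun x : S => g x.1) ≤ ε) :
    ∀ x ∈ S, |f x - g x| ≤ gmax ^ 2 / gmin * ε * Real.exp ε := by
  intro x hx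
  obtain ⟨x₀, hx₀, hcross⟩ := hconn.isPreconnected.exists_eq_of_setIntegral_eq hSc hvol.ne' hf hg
    (hfi.trans hgi.symm)
  obtain ⟨hlow, hup⟩ := exp_neg_mul_le_and_le_exp_mul_of_dH_le (x₀ := (⟨x₀, hx₀⟩ : S)) hgmin
    (fun y : S => hfb y y.2) (fun y : S => hgb y y.2) hcross hd ⟨x, hx⟩
  have hgx : 0 < g x := hgmin.trans_le (hgb x hx).1
  have hclose := abs_sub_le_mul_exp_mul_of_exp_neg_mul_le_of_le_exp_mul hgx hlow hup
  have hK : 0 ≤ ε * Real.exp ε := nonneg_of_mul_nonneg_left ((abs_nonneg _).trans hclose) hgx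
  have hgmax : gmax ≤ gmax ^ 2 / gmin := by
    rw [le_div_iff₀ hgmin, sq]
    exact mul_le_mul_of_nonneg_left hmm (hgmin.le.trans hmm)
  calc |f x - g x| ≤ ε * Real.exp ε * g x := hclose
    _ ≤ ε * Real.exp ε * (gmax ^ 2 / gmin) := by gcongr; exact (hgb x hx).2.trans hgmax
    _ = gmax ^ 2 / gmin * ε * Real.exp ε := by ring
end

section
/- Let h̃, h : ℝ^d × [0,T) → (0,∞) be defined by h(x,t) = ∫_{S_T} q(t,x;T,y)ν_T(y)dy and h̃(x,t) = ∫_{S_T} q(t,x;T,y)ν̃_T(y)dy with ν_min ≤ ν_T, ν̃_T ≤ ν_max on S_T. If sup_{y∈S_T}‖∇_x log q(t,x;T,y)‖ ≤ C(‖x‖+R)/(T−t) for S_T ⊆ B_R(0), then ‖∇_x log h̃(x,t) − ∇_x log h(x,t)‖ ≤ (‖ν̃_T − ν_T‖_{∞,S_T}/ν_min) · (sup_{y∈S_T}‖∇_x log q(t,x;T,y)‖ + ‖∇_x log h(x,t)‖) ≤ 2C·(‖ν̃_T − ν_T‖_{∞,S_T}/ν_min)·(‖x‖+R)/(T−t).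 -/
/-!
Differentiating under the integral, `∇ log h = (∫ ν q)⁻¹ ∫ ν ∇q` is an average of the
`∇ log q(·, y)` with weights `ν(y) q(·, y)`, so `‖∇ log h‖ ≤ sup_y ‖∇ log q(·, y)‖`. Writing
`∇ log h̃ − ∇ log h = h̃⁻¹ (∇h̃ − ∇h) + h̃⁻¹ (h − h̃) ∇ log h`, one has
`‖∇h̃ − ∇h‖ = ‖∫ (ν̃ − ν) ∇q‖ ≤ ‖ν̃ − ν‖_∞ sup_y ‖∇ log q(·, y)‖ ∫ q` (as `‖∇q‖ = q ‖∇ log q‖`)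
and `|h − h̃| ≤ ‖ν̃ − ν‖_∞ ∫ q`, while `h̃ ≥ ν_min ∫ q`.
-/

open MeasureTheory InnerProductSpace Metric Function

theorem setIntegral_pos_of_forall_pos {Y : Type*} [MeasurableSpace Y] {μ : Measure Y} {S : Set Y}
    (hS : MeasurableSet S) (hμS : μ S ≠ 0) {f : Y → ℝ} (hf : IntegrableOn f S μ)
    (hpos : ∀ y ∈ S, 0 < f y) : 0 < ∫ y in S, f y ∂μ := by
  rw [setIntegral_pos_iff_support_of_nonneg_ae
    (ae_restrict_of_forall_mem hS fun y hy => (hpos y hy).le) hf,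
    Set.inter_eq_right.2 fun y hy => mem_support.2 (hpos y hy).ne']
  exact pos_iff_ne_zero.2 hμS

theorem norm_setIntegral_smul_sub_setIntegral_smul_le {Y F : Type*} [MeasurableSpace Y]
    [NormedAddCommGroup F] [NormedSpace ℝ F] {μ : Measure Y} {S : Set Y} (hS : MeasurableSet S)
    {ν ν' : Y → ℝ} {g : Y → F} {w : Y → ℝ} (hνg : IntegrableOn (fun y => ν y • g y) S μ)
    (hν'g : IntegrableOn (fun y => ν' y • g y) S μ) (hw : IntegrableOn w S μ) {Δ : ℝ}
    (hΔ : ∀ y ∈ S, |ν' y - ν y| ≤ Δ) (hgw : ∀ y ∈ S, ‖g y‖ ≤ w y) :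
    ‖∫ y in S, ν' y • g y ∂μ - ∫ y in S, ν y • g y ∂μ‖ ≤ Δ * ∫ y in S, w y ∂μ := by
  rw [← integral_sub hν'g hνg, ← integral_const_mul]
  refine norm_integral_le_of_norm_le (hw.const_mul Δ) (ae_restrict_of_forall_mem hS fun y hy => ?_)
  rw [← sub_smul, norm_smul, Real.norm_eq_abs]
  exact mul_le_mul (hΔ y hy) (hgw y hy) (norm_nonneg _) ((abs_nonneg _).trans (hΔ y hy))

theorem mul_setIntegral_le_setIntegral_smul {Y : Type*} [MeasurableSpace Y] {μ : Measure Y}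
    {S : Set Y} (hS : MeasurableSet S) {w ν : Y → ℝ} (hw : IntegrableOn w S μ)
    (hνw : IntegrableOn (fun y => ν y • w y) S μ) (hw0 : ∀ y ∈ S, 0 ≤ w y) {c : ℝ}
    (hc : ∀ y ∈ S, c ≤ ν y) : c * ∫ y in S, w y ∂μ ≤ ∫ y in S, ν y • w y ∂μ := by
  rw [← integral_const_mul]
  exact setIntegral_mono_on (hw.const_mul c) hνw hS fun y hy =>
    mul_le_mul_of_nonneg_right (hc y hy) (hw0 y hy)

theorem norm_inv_smul_sub_inv_smul_le {F : Type*} [NormedAddCommGroup F] [NormedSpace ℝ F]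
    {a b ε Q : ℝ} (ha : a ≠ 0) (hb : 0 < b) {u v : F} (hvu : ‖v - u‖ ≤ ε * b * Q)
    (hab : |a - b| ≤ ε * b) : ‖b⁻¹ • v - a⁻¹ • u‖ ≤ ε * (Q + ‖a⁻¹ • u‖) := by
  have hsplit : b⁻¹ • v - a⁻¹ • u = b⁻¹ • (v - u) + (b⁻¹ * (a - b)) • a⁻¹ • u := by
    have hcoef : b⁻¹ * (a - b) * a⁻¹ = b⁻¹ - a⁻¹ := by field_simp
    rw [smul_smul, hcoef, smul_sub, sub_smul]
    abel
  calc ‖b⁻¹ • v - a⁻¹ • u‖ ≤ b⁻¹ * ‖v - u‖ + b⁻¹ * |a - b| * ‖a⁻¹ • u‖ := by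
        rw [hsplit]
        refine (norm_add_le _ _).trans_eq ?_
        rw [norm_smul, norm_smul, norm_mul, Real.norm_of_nonneg (inv_pos.2 hb).le, Real.norm_eq_abs]
    _ ≤ b⁻¹ * (ε * b * Q) + b⁻¹ * (ε * b) * ‖a⁻¹ • u‖ := by gcongr
    _ = ε * (Q + ‖a⁻¹ • u‖) := by field_simp

section Gradient

variable {E : Type*} [NormedAddCommGroup E] [InnerProductSpace ℝ E] [CompleteSpace E]

theorem HasGradientAt.log {f : E → ℝ} {f' x : E} (hf : HasGradientAt f f' x) (hx : f x ≠ 0) :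
    HasGradientAt (fun x => Real.log (f x)) ((f x)⁻¹ • f') x := by
  rw [hasGradientAt_iff_hasFDerivAt, map_smul]
  exact hf.hasFDerivAt.log hx

theorem norm_gradient_le_of_norm_gradient_log_le {f : E → ℝ} {x : E} {Q : ℝ}
    (hf : DifferentiableAt ℝ f x) (hx : 0 < f x)
    (hQ : ‖gradient (fun x => Real.log (f x)) x‖ ≤ Q) : ‖gradient f x‖ ≤ f x * Q := by
  rw [(hf.hasGradientAt.log hx.ne').gradient, norm_smul, Real.norm_of_nonneg (inv_pos.2 hx).le,
    inv_mul_le_iff₀ hx] at hQ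
  exact hQ

theorem HasGradientAt.of_hasFDerivAt_integral {Y : Type*} [MeasurableSpace Y] {μ : Measure Y}
    {F : Y → E} (hF : Integrable F μ) {f : E → ℝ} {x : E}
    (hf : HasFDerivAt f (∫ y, toDual ℝ E (F y) ∂μ) x) :
    HasGradientAt f (∫ y, F y ∂μ) x := by
  rw [hasGradientAt_iff_hasFDerivAt]
  refine hf.congr_fderiv ?_
  exact (toDual ℝ E).toContinuousLinearEquiv.toContinuousLinearMap.integral_comp_commSL
    (by simp) hF

end Gradient

section ParametricIntegral

variable {E : Type*} [NormedAddCommGroup E] [InnerProductSpace ℝ E] [FiniteDimensional ℝ E]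

variable {Y : Type*} [TopologicalSpace Y] [T2Space Y] [MeasurableSpace Y] [OpensMeasurableSpace Y]
  {μ : Measure Y} [IsFiniteMeasureOnCompacts μ] {S : Set Y}

theorem IsCompact.integrableOn_smul_of_bdd {F : Type*} [NormedAddCommGroup F] [NormedSpace ℝ F]
    (hS : IsCompact S) {f : Y → F} (hf : Continuous f) {ν : Y → ℝ} (hν : Measurable ν) {M : ℝ}
    (hνM : ∀ y ∈ S, |ν y| ≤ M) : IntegrableOn (fun y => ν y • f y) S μ :=
  (hf.continuousOn.integrableOn_compact hS).bdd_smul M hν.aestronglyMeasurable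
    (ae_restrict_of_forall_mem hS.measurableSet hνM)

theorem hasGradientAt_setIntegral_mul {q : E → Y → ℝ}
    (hq : Continuous (uncurry q)) (hq_diff : ∀ y, Differentiable ℝ (q · y))
    (hgrad : Continuous fun p : E × Y => gradient (q · p.2) p.1) (hS : IsCompact S)
    {ν : Y → ℝ} (hν : Measurable ν) {M : ℝ} (hνM : ∀ y ∈ S, |ν y| ≤ M) (x : E) :
    HasGradientAt (fun x => ∫ y in S, q x y * ν y ∂μ)
      (∫ y in S, ν y • gradient (q · y) x ∂μ) x := by
  have hgx : Continuous fun y => gradient (q · y) x := hgrad.comp (Continuous.prodMk_right x)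
  obtain ⟨G, hG⟩ := ((isCompact_closedBall x 1).prod hS).exists_bound_of_continuousOn
    hgrad.continuousOn
  have hνG : ∀ y ∈ S, ∀ x' ∈ closedBall x 1, ‖ν y • gradient (q · y) x'‖ ≤ M * G := by
    intro y hy x' hx'
    rw [norm_smul, Real.norm_eq_abs]
    exact mul_le_mul (hνM y hy) (hG (x', y) ⟨hx', hy⟩) (norm_nonneg _)
      ((abs_nonneg _).trans (hνM y hy))
  refine HasGradientAt.of_hasFDerivAt_integral (hS.integrableOn_smul_of_bdd hgx hν hνM) ?_
  refine hasFDerivAt_integral_of_dominated_of_fderiv_le (𝕜 := ℝ) (bound := fun _ => M * G)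
    (F' := fun x' y => toDual ℝ E (ν y • gradient (q · y) x'))
    (ball_mem_nhds x zero_lt_one) ?_ ?_ ?_ ?_ (integrableOn_const (hS.measure_lt_top (μ := μ)).ne)
    ?_
  · exact Filter.Eventually.of_forall fun x' =>
      ((hq.comp (Continuous.prodMk_right x')).measurable.mul hν).aestronglyMeasurable
  · exact ((hq.comp (Continuous.prodMk_right x)).continuousOn.integrableOn_compact hS).mul_bdd
      hν.aestronglyMeasurable (ae_restrict_of_forall_mem hS.measurableSet hνM)
  · exact (toDual ℝ E).continuous.comp_aestronglyMeasurable
      (hν.aestronglyMeasurable.smul hgx.aestronglyMeasurable)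
  · refine ae_restrict_of_forall_mem hS.measurableSet fun y hy x' hx' => ?_
    rw [LinearIsometryEquiv.norm_map]
    exact hνG y hy x' (ball_subset_closedBall hx')
  · refine ae_restrict_of_forall_mem hS.measurableSet fun y _ x' _ => ?_
    rw [map_smul]
    exact ((hq_diff y x').hasGradientAt.hasFDerivAt).mul_const (ν y)

theorem gradient_log_setIntegral_mul {q : E → Y → ℝ} (hq : Continuous (uncurry q))
    (hq_diff : ∀ y, Differentiable ℝ (q · y))
    (hgrad : Continuous fun p : E × Y => gradient (q · p.2) p.1) (hS : IsCompact S)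
    {ν : Y → ℝ} (hν : Measurable ν) {M : ℝ} (hνM : ∀ y ∈ S, |ν y| ≤ M) {x : E}
    (hx : ∫ y in S, q x y * ν y ∂μ ≠ 0) :
    gradient (fun x => Real.log (∫ y in S, q x y * ν y ∂μ)) x =
      (∫ y in S, ν y • q x y ∂μ)⁻¹ • ∫ y in S, ν y • gradient (q · y) x ∂μ := by
  simp_rw [smul_eq_mul, mul_comm (ν _)]
  exact ((hasGradientAt_setIntegral_mul (μ := μ) hq hq_diff hgrad hS hν hνM x).log hx).gradient

theorem norm_gradient_log_setIntegral_mul_le {q : E → Y → ℝ} (hq : Continuous (uncurry q))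
    (hq_pos : ∀ x y, 0 < q x y) (hq_diff : ∀ y, Differentiable ℝ (q · y))
    (hgrad : Continuous fun p : E × Y => gradient (q · p.2) p.1) (hS : IsCompact S)
    (hμS : μ S ≠ 0) {ν : Y → ℝ} (hν : Measurable ν) {νmin νmax : ℝ} (hνmin : 0 < νmin)
    (hνb : ∀ y ∈ S, νmin ≤ ν y ∧ ν y ≤ νmax) {x : E} {Q : ℝ}
    (hQ : ∀ y ∈ S, ‖gradient (fun x' => Real.log (q x' y)) x‖ ≤ Q) :
    ‖gradient (fun x => Real.log (∫ y in S, q x y * ν y ∂μ)) x‖ ≤ Q := by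
  have hqx : Continuous (q x ·) := hq.comp (Continuous.prodMk_right x)
  have hνM : ∀ y ∈ S, |ν y| ≤ νmax := fun y hy =>
    (abs_of_pos (hνmin.trans_le (hνb y hy).1)).trans_le (hνb y hy).2
  have hνq := hS.integrableOn_smul_of_bdd (μ := μ) hqx hν hνM
  have hh : 0 < ∫ y in S, ν y • q x y ∂μ :=
    setIntegral_pos_of_forall_pos hS.measurableSet hμS hνq fun y hy =>
      mul_pos (hνmin.trans_le (hνb y hy).1) (hq_pos x y)
  rw [gradient_log_setIntegral_mul hq hq_diff hgrad hS hν hνM (by simpa [mul_comm] using hh.ne'),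
    norm_smul, Real.norm_of_nonneg (inv_pos.2 hh).le, inv_mul_le_iff₀ hh, ← integral_mul_const]
  refine norm_integral_le_of_norm_le (hνq.mul_const Q)
    (ae_restrict_of_forall_mem hS.measurableSet fun y hy => ?_)
  have hν0 : 0 ≤ ν y := hνmin.le.trans (hνb y hy).1
  rw [norm_smul, Real.norm_of_nonneg hν0, smul_eq_mul, mul_assoc]
  exact mul_le_mul_of_nonneg_left
    (norm_gradient_le_of_norm_gradient_log_le (hq_diff y x) (hq_pos x y) (hQ y hy)) hν0

theorem norm_gradient_log_setIntegral_mul_sub_le {q : E → Y → ℝ} (hq : Continuous (uncurry q))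
    (hq_pos : ∀ x y, 0 < q x y) (hq_diff : ∀ y, Differentiable ℝ (q · y))
    (hgrad : Continuous fun p : E × Y => gradient (q · p.2) p.1) (hS : IsCompact S)
    (hμS : μ S ≠ 0) {ν ν' : Y → ℝ} (hν : Measurable ν) (hν' : Measurable ν') {νmin νmax : ℝ}
    (hνmin : 0 < νmin) (hνb : ∀ y ∈ S, νmin ≤ ν y ∧ ν y ≤ νmax)
    (hν'b : ∀ y ∈ S, νmin ≤ ν' y ∧ ν' y ≤ νmax) {Δ : ℝ} (hΔ : ∀ y ∈ S, |ν' y - ν y| ≤ Δ)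
    {x : E} {Q : ℝ} (hQ : ∀ y ∈ S, ‖gradient (fun x' => Real.log (q x' y)) x‖ ≤ Q) :
    ‖gradient (fun x => Real.log (∫ y in S, q x y * ν' y ∂μ)) x
        - gradient (fun x => Real.log (∫ y in S, q x y * ν y ∂μ)) x‖
      ≤ Δ / νmin * (Q + ‖gradient (fun x => Real.log (∫ y in S, q x y * ν y ∂μ)) x‖) := by
  obtain ⟨y₀, hy₀⟩ := nonempty_of_measure_ne_zero hμS
  have hΔ0 : 0 ≤ Δ := (abs_nonneg _).trans (hΔ y₀ hy₀)
  have hQ0 : 0 ≤ Q := (norm_nonneg _).trans (hQ y₀ hy₀)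
  have hqx : Continuous (q x ·) := hq.comp (Continuous.prodMk_right x)
  have hgx : Continuous fun y => gradient (q · y) x := hgrad.comp (Continuous.prodMk_right x)
  have hI : IntegrableOn (q x ·) S μ := hqx.continuousOn.integrableOn_compact hS
  have hIpos : 0 < ∫ y in S, q x y ∂μ :=
    setIntegral_pos_of_forall_pos hS.measurableSet hμS hI fun y _ => hq_pos x y
  have hνM : ∀ y ∈ S, |ν y| ≤ νmax := fun y hy =>
    (abs_of_pos (hνmin.trans_le (hνb y hy).1)).trans_le (hνb y hy).2
  have hν'M : ∀ y ∈ S, |ν' y| ≤ νmax := fun y hy =>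
    (abs_of_pos (hνmin.trans_le (hν'b y hy).1)).trans_le (hν'b y hy).2
  have hνq := hS.integrableOn_smul_of_bdd (μ := μ) hqx hν hνM
  have hν'q := hS.integrableOn_smul_of_bdd (μ := μ) hqx hν' hν'M
  have hh := mul_setIntegral_le_setIntegral_smul hS.measurableSet hI hνq
    (fun y _ => (hq_pos x y).le) fun y hy => (hνb y hy).1
  have hh' := mul_setIntegral_le_setIntegral_smul hS.measurableSet hI hν'q
    (fun y _ => (hq_pos x y).le) fun y hy => (hν'b y hy).1
  have hhpos := (mul_pos hνmin hIpos).trans_le hh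
  have hh'pos := (mul_pos hνmin hIpos).trans_le hh'
  have hΔI : Δ * ∫ y in S, q x y ∂μ ≤ Δ / νmin * ∫ y in S, ν' y • q x y ∂μ := by
    rw [div_mul_eq_mul_div, le_div_iff₀ hνmin, mul_assoc, mul_comm _ νmin]
    exact mul_le_mul_of_nonneg_left hh' hΔ0
  rw [gradient_log_setIntegral_mul hq hq_diff hgrad hS hν hνM (by simpa [mul_comm] using hhpos.ne'),
    gradient_log_setIntegral_mul hq hq_diff hgrad hS hν' hν'M
      (by simpa [mul_comm] using hh'pos.ne')]
  refine norm_inv_smul_sub_inv_smul_le hhpos.ne' hh'pos ?_ ?_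
  · calc _ ≤ Δ * ∫ y in S, q x y * Q ∂μ :=
          norm_setIntegral_smul_sub_setIntegral_smul_le hS.measurableSet
            (hS.integrableOn_smul_of_bdd hgx hν hνM) (hS.integrableOn_smul_of_bdd hgx hν' hν'M)
            (hI.mul_const Q) hΔ fun y hy =>
              norm_gradient_le_of_norm_gradient_log_le (hq_diff y x) (hq_pos x y) (hQ y hy)
      _ = Δ * (∫ y in S, q x y ∂μ) * Q := by rw [integral_mul_const, mul_assoc]
      _ ≤ _ := mul_le_mul_of_nonneg_right hΔI hQ0
  · rw [abs_sub_comm, ← Real.norm_eq_abs]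
    exact (norm_setIntegral_smul_sub_setIntegral_smul_le hS.measurableSet hνq hν'q hI hΔ
      fun y _ => (Real.norm_of_nonneg (hq_pos x y).le).le).trans hΔI

end ParametricIntegral

theorem stmt17_general {n : ℕ} (T t R C : ℝ)
    (q : EuclideanSpace ℝ (Fin n) → EuclideanSpace ℝ (Fin n) → ℝ)
    (hqc : Continuous fun p : EuclideanSpace ℝ (Fin n) × EuclideanSpace ℝ (Fin n) => q p.1 p.2)
    (hqpos : ∀ x y, 0 < q x y)
    (hqc1 : ∀ y, ContDiff ℝ 1 fun x => q x y)
    (hgradc : Continuous fun p : EuclideanSpace ℝ (Fin n) × EuclideanSpace ℝ (Fin n) =>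
      gradient (fun x => q x p.2) p.1)
    (ST : Set (EuclideanSpace ℝ (Fin n))) (hSTc : IsCompact ST)
    (hvol : 0 < volume ST)
    (νT ν'T : EuclideanSpace ℝ (Fin n) → ℝ)
    (hνm : Measurable νT) (hν'm : Measurable ν'T)
    (νmin νmax : ℝ) (hνmin : 0 < νmin)
    (hνb : ∀ y ∈ ST, νmin ≤ νT y ∧ νT y ≤ νmax)
    (hν'b : ∀ y ∈ ST, νmin ≤ ν'T y ∧ ν'T y ≤ νmax)
    (hgrad : ∀ x, ∀ y ∈ ST,
      ‖gradient (fun x' => Real.log (q x' y)) x‖ ≤ C * (‖x‖ + R) / (T - t)) :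
    ∀ x,
      ‖gradient (fun x' => Real.log (∫ y in ST, q x' y * ν'T y)) x
          - gradient (fun x' => Real.log (∫ y in ST, q x' y * νT y)) x‖
        ≤ sSup ((fun y => |ν'T y - νT y|) '' ST) / νmin *
            (sSup ((fun y => ‖gradient (fun x' => Real.log (q x' y)) x‖) '' ST)
              + ‖gradient (fun x' => Real.log (∫ y in ST, q x' y * νT y)) x‖)
      ∧
      ‖gradient (fun x' => Real.log (∫ y in ST, q x' y * ν'T y)) x
          - gradient (fun x' => Real.log (∫ y in ST, q x' y * νT y)) x‖
        ≤ 2 * C * (sSup ((fun y => |ν'T y - νT y|) '' ST) / νmin)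
            * (‖x‖ + R) / (T - t) := by
  intro x
  obtain ⟨y₀, hy₀⟩ := nonempty_of_measure_ne_zero hvol.ne'
  have hq_diff : ∀ y, Differentiable ℝ (q · y) := fun y => (hqc1 y).differentiable one_ne_zero
  set Δ := sSup ((fun y => |ν'T y - νT y|) '' ST)
  set Q := sSup ((fun y => ‖gradient (fun x' => Real.log (q x' y)) x‖) '' ST)
  have hΔ_bdd : BddAbove ((fun y => |ν'T y - νT y|) '' ST) := by
    refine ⟨νmax - νmin, ?_⟩
    rintro _ ⟨y, hy, rfl⟩
    exact abs_sub_le_iff.2 ⟨by linarith [hν'b y hy, hνb y hy], by linarith [hν'b y hy, hνb y hy]⟩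
  have hΔ : ∀ y ∈ ST, |ν'T y - νT y| ≤ Δ := fun y hy => le_csSup hΔ_bdd ⟨y, hy, rfl⟩
  have hQ : ∀ y ∈ ST, ‖gradient (fun x' => Real.log (q x' y)) x‖ ≤ Q := fun y hy =>
    le_csSup ⟨_, by rintro _ ⟨y, hy, rfl⟩; exact hgrad x y hy⟩ ⟨y, hy, rfl⟩
  have hQC : Q ≤ C * (‖x‖ + R) / (T - t) :=
    csSup_le ⟨_, y₀, hy₀, rfl⟩ (by rintro _ ⟨y, hy, rfl⟩; exact hgrad x y hy)
  have hmain := norm_gradient_log_setIntegral_mul_sub_le hqc hqpos hq_diff hgradc hSTc hvol.ne'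
    hνm hν'm hνmin hνb hν'b hΔ hQ
  have hlog := norm_gradient_log_setIntegral_mul_le hqc hqpos hq_diff hgradc hSTc hvol.ne'
    hνm hνmin hνb hQ
  have hΔ0 : 0 ≤ Δ / νmin := div_nonneg ((abs_nonneg _).trans (hΔ y₀ hy₀)) hνmin.le
  refine ⟨hmain, hmain.trans ?_⟩
  calc _ ≤ Δ / νmin * (C * (‖x‖ + R) / (T - t) + C * (‖x‖ + R) / (T - t)) := by
        gcongr; exact hlog.trans hQC
    _ = _ := by ring

/-- Perturbation of `h`-transform gradients: with
`h(x) = ∫_{S_T} q(t,x;T,y) ν_T(y) dy` and `h̃(x) = ∫_{S_T} q(t,x;T,y) ν̃_T(y) dy`,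
`ν_min ≤ ν_T, ν̃_T ≤ ν_max` on `S_T ⊆ B_R(0)`, and
`sup_{y∈S_T} ‖∇_x log q(t,x;T,y)‖ ≤ C(‖x‖+R)/(T−t)`, one has
`‖∇ log h̃ − ∇ log h‖ ≤ (‖ν̃_T−ν_T‖_{∞,S_T}/ν_min)(sup_y ‖∇ log q‖ + ‖∇ log h‖)
  ≤ 2C (‖ν̃_T−ν_T‖_{∞,S_T}/ν_min)(‖x‖+R)/(T−t)`. -/
theorem stmt17 {n : ℕ} (T t R C : ℝ) (htT : t < T) (hR : 0 < R) (hC : 0 ≤ C)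
    (q : EuclideanSpace ℝ (Fin n) → EuclideanSpace ℝ (Fin n) → ℝ)
    (hqc : Continuous fun p : EuclideanSpace ℝ (Fin n) × EuclideanSpace ℝ (Fin n) => q p.1 p.2)
    (hqpos : ∀ x y, 0 < q x y)
    (hqc1 : ∀ y, ContDiff ℝ 1 fun x => q x y)
    (hgradc : Continuous fun p : EuclideanSpace ℝ (Fin n) × EuclideanSpace ℝ (Fin n) =>
      gradient (fun x => q x p.2) p.1)
    (ST : Set (EuclideanSpace ℝ (Fin n))) (hSTc : IsCompact ST)
    (hSTm : MeasurableSet ST) (hvol : 0 < volume ST)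
    (hSTR : ST ⊆ Metric.closedBall 0 R)
    (νT ν'T : EuclideanSpace ℝ (Fin n) → ℝ)
    (hνm : Measurable νT) (hν'm : Measurable ν'T)
    (νmin νmax : ℝ) (hνmin : 0 < νmin)
    (hνb : ∀ y ∈ ST, νmin ≤ νT y ∧ νT y ≤ νmax)
    (hν'b : ∀ y ∈ ST, νmin ≤ ν'T y ∧ ν'T y ≤ νmax)
    (hνsupp : ∀ y ∉ ST, νT y = 0) (hν'supp : ∀ y ∉ ST, ν'T y = 0)
    (hgrad : ∀ x, ∀ y ∈ ST,
      ‖gradient (fun x' => Real.log (q x' y)) x‖ ≤ C * (‖x‖ + R) / (T - t)) :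
    ∀ x,
      ‖gradient (fun x' => Real.log (∫ y in ST, q x' y * ν'T y)) x
          - gradient (fun x' => Real.log (∫ y in ST, q x' y * νT y)) x‖
        ≤ sSup ((fun y => |ν'T y - νT y|) '' ST) / νmin *
            (sSup ((fun y => ‖gradient (fun x' => Real.log (q x' y)) x‖) '' ST)
              + ‖gradient (fun x' => Real.log (∫ y in ST, q x' y * νT y)) x‖)
      ∧
      ‖gradient (fun x' => Real.log (∫ y in ST, q x' y * ν'T y)) x
          - gradient (fun x' => Real.log (∫ y in ST, q x' y * νT y)) x‖
        ≤ 2 * C * (sSup ((fun y => |ν'T y - νT y|) '' ST) / νmin)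
            * (‖x‖ + R) / (T - t) :=
  stmt17_general T t R C q hqc hqpos hqc1 hgradc ST hSTc hvol νT ν'T hνm hν'm νmin νmax hνmin hνb
    hν'b hgrad
end
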